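/- arXiv:1810.09893 — 11 statements merged into one kernel-verified Lean document; each statement's English description precedes it below -/
import Mathlib

section
/- Let n ≥ 1 and let a : Fin n → ℚ. The circulant matrix C(a_0,…,a_{n−1}) is invertible (equivalently, has nonzero determinant) if and only if the associated polynomial f(x) = a_0 + a_1·x + … + a_{n−1}·x^{n−1} and the polynomial x^n − 1 have no common root in ℂ; equivalently, if and only if f(ω) ≠ 0 for every complex n-th root of unity ω. -/
open Polynomial

/-- The circulant matrix whose `(i,j)` entry is `a (j - i)` (indices mod `n`). -/
def circulantMat {n : ℕ} (a : Fin n → ℚ) : Matrix (Fin n) (Fin n) ℚ :=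
  Matrix.of fun i j => a (j - i)

/-- The associated polynomial `f(x) = a₀ + a₁ x + ⋯ + a_{n-1} x^{n-1}`. -/
noncomputable def assocPoly {n : ℕ} (a : Fin n → ℚ) : Polynomial ℚ :=
  ∑ j : Fin n, C (a j) * X ^ (j : ℕ)

theorem stmt_0 (n : ℕ) (hn : 1 ≤ n) (a : Fin n → ℚ) :
    (circulantMat a).det ≠ 0 ↔
      ∀ ω : ℂ, ω ^ n = 1 → Polynomial.aeval ω (assocPoly a) ≠ 0 := by
  have hn0 : n ≠ 0 := by omega
  haveI : NeZero n := ⟨hn0⟩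
  set ζ : ℂ := Complex.exp (2 * Real.pi * Complex.I / n) with hζdef
  have hprim : IsPrimitiveRoot ζ n := Complex.isPrimitiveRoot_exp n hn0
  have hζn : ζ ^ n = 1 := hprim.pow_eq_one
  -- ζ ^ (x % n) = ζ ^ x
  have hpowmod : ∀ x : ℕ, ζ ^ (x % n) = ζ ^ x := by
    intro x
    conv_rhs => rw [← Nat.div_add_mod x n]
    rw [pow_add, pow_mul, hζn, one_pow, one_mul]
  set M : Matrix (Fin n) (Fin n) ℂ :=
    (circulantMat a).map (algebraMap ℚ ℂ) with hM
  set V : Matrix (Fin n) (Fin n) ℂ :=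
    Matrix.of fun i j : Fin n => ζ ^ ((i : ℕ) * (j : ℕ)) with hV
  set D : Matrix (Fin n) (Fin n) ℂ :=
    Matrix.diagonal fun k : Fin n => Polynomial.aeval (ζ ^ (k : ℕ)) (assocPoly a) with hD
  have haeval : ∀ x : ℂ, Polynomial.aeval x (assocPoly a)
      = ∑ m : Fin n, (a m : ℂ) * x ^ (m : ℕ) := by
    intro x
    simp [assocPoly, map_sum, Algebra.smul_def]
  have key : M * V = V * D := by
    ext i k
    have hLHS : (M * V) i k
        = ∑ j : Fin n, (a (j - i) : ℂ) * ζ ^ ((j : ℕ) * (k : ℕ)) := by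
      simp [Matrix.mul_apply, hM, hV, circulantMat]
    rw [hLHS]
    have hRHS : (V * D) i k
        = ζ ^ ((i : ℕ) * (k : ℕ)) *
            ∑ m : Fin n, (a m : ℂ) * (ζ ^ (k : ℕ)) ^ (m : ℕ) := by
      simp [Matrix.mul_diagonal, hV, hD, haeval]
    rw [hRHS, Finset.mul_sum]
    rw [← Equiv.sum_comp (Equiv.addLeft i) (fun j => (a (j - i) : ℂ) * ζ ^ ((j : ℕ) * (k : ℕ)))]
    refine Finset.sum_congr rfl fun m _ => ?_
    have h1 : (Equiv.addLeft i m) - i = m := by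
      simp [Equiv.addLeft]
    have h2 : ζ ^ (((Equiv.addLeft i m : Fin n) : ℕ) * (k : ℕ))
        = ζ ^ ((i : ℕ) * (k : ℕ)) * (ζ ^ (k : ℕ)) ^ ((m : ℕ)) := by
      have hv : ((Equiv.addLeft i m : Fin n) : ℕ) = ((i : ℕ) + (m : ℕ)) % n := by
        simp [Equiv.addLeft, Fin.add_def, Nat.add_comm]
      rw [hv, ← hpowmod ((((i : ℕ) + (m : ℕ)) % n) * (k : ℕ)), Nat.mod_mul_mod,
        hpowmod, add_mul, pow_add, mul_comm (m : ℕ) (k : ℕ), pow_mul ζ (k : ℕ) (m : ℕ)]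
    rw [h1, h2]
    ring
  have hVdet : V.det ≠ 0 := by
    have : V = Matrix.vandermonde fun i : Fin n => ζ ^ (i : ℕ) := by
      ext i j
      simp [hV, Matrix.vandermonde, ← pow_mul]
    rw [this, Matrix.det_vandermonde]
    refine Finset.prod_ne_zero_iff.2 fun i _ => Finset.prod_ne_zero_iff.2 fun j hj => ?_
    intro h
    have hji : (j : ℕ) = (i : ℕ) := hprim.pow_inj j.2 i.2 (sub_eq_zero.1 h)
    exact absurd (Fin.ext hji) (Finset.mem_Ioi.1 hj).ne'
  have hdet : M.det = ∏ k : Fin n, Polynomial.aeval (ζ ^ (k : ℕ)) (assocPoly a) := by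
    have h := congrArg Matrix.det key
    rw [Matrix.det_mul, Matrix.det_mul, Matrix.det_diagonal] at h
    exact mul_right_cancel₀ hVdet (h.trans (mul_comm _ _))
  have hMdet : M.det = algebraMap ℚ ℂ (circulantMat a).det := by
    exact ((algebraMap ℚ ℂ).map_det _).symm
  constructor
  · intro h ω hω hzero
    obtain ⟨k, hk, rfl⟩ := hprim.eq_pow_of_pow_eq_one hω
    apply h
    have : M.det = 0 := by
      rw [hdet]
      exact Finset.prod_eq_zero (Finset.mem_univ (⟨k, hk⟩ : Fin n)) hzero
    rw [hMdet] at this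
    exact (map_eq_zero_iff _ (algebraMap ℚ ℂ).injective).1 this
  · intro h hdet0
    have : M.det = 0 := by rw [hMdet, hdet0, map_zero]
    rw [hdet] at this
    obtain ⟨k, _, hk⟩ := Finset.prod_eq_zero_iff.1 this
    exact h (ζ ^ (k : ℕ)) (by rw [← pow_mul, mul_comm, pow_mul, hζn, one_pow]) hk
end

section
/- Let n ≥ 1 and let a : Fin n → ℚ. The circulant matrix C(a_0,…,a_{n−1}) is singular (has determinant zero) if and only if there exists a divisor d of n such that the d-th cyclotomic polynomial Φ_d(x) divides the associated polynomial f(x) in ℚ[x]. -/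
open Polynomial

/-!
Writing `σ` for the cyclic shift matrix, `C(a) = f(σ)` up to transposition, and `σ` has minimal
polynomial `Xⁿ - 1 = ∏_{d ∣ n} Φ_d`. For an algebraic element `x`, `p(x)` is invertible exactly
when `p` is coprime to the minimal polynomial of `x`; since the `Φ_d` are irreducible over `ℚ`,
`f` fails to be coprime to `Xⁿ - 1` exactly when some `Φ_d` with `d ∣ n` divides it.
-/

open Matrix

theorem circulantMat_eq_transpose_circulant {n : ℕ} (a : Fin n → ℚ) :
    circulantMat a = (circulant a)ᵀ :=
  rfl

theorem isUnit_aeval_iff_isCoprime_minpoly {K A : Type*} [Field K] [Ring A] [Algebra K A]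
    {x : A} (hx : IsIntegral K x) (p : K[X]) :
    IsUnit (aeval x p) ↔ IsCoprime p (minpoly K x) := by
  have hcomm (q r : K[X]) : Commute (aeval x q) (aeval x r) := (Commute.all q r).map (aeval x)
  constructor
  · intro hp
    refine isCoprime_of_irreducible_dvd (fun h => minpoly.ne_zero hx h.2) ?_
    rintro q hq ⟨r, rfl⟩ ⟨s, hs⟩
    have hqx : IsUnit (aeval x q) := by
      rw [map_mul, (hcomm q r).isUnit_mul_iff] at hp
      exact hp.1
    have hsx : aeval x s = 0 := by
      rw [← hqx.mul_right_eq_zero, ← map_mul, ← hs, minpoly.aeval]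
    obtain ⟨t, ht⟩ := minpoly.dvd K x hsx
    -- `minpoly K x = q * s` together with `minpoly K x ∣ s` forces `q` to be a unit
    have hqt : q * t = 1 := by
      refine mul_left_cancel₀ (minpoly.ne_zero hx) ?_
      rw [mul_one, mul_left_comm, ← ht, ← hs]
    exact hq.not_isUnit (.of_mul_eq_one t hqt)
  · rintro ⟨u, v, huv⟩
    have h := congrArg (aeval x) huv
    rw [map_add, map_mul, map_mul, minpoly.aeval, mul_zero, add_zero, map_one] at h
    exact ((hcomm u p).isUnit_mul_iff.mp (h ▸ isUnit_one)).2

theorem isCoprime_X_pow_sub_one_iff {n : ℕ} (hn : n ≠ 0) (f : ℚ[X]) :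
    IsCoprime f (X ^ n - 1) ↔ ∀ d, d ∣ n → ¬cyclotomic d ℚ ∣ f := by
  rw [← prod_cyclotomic_eq_X_pow_sub_one (Nat.pos_of_ne_zero hn), IsCoprime.prod_right_iff]
  refine forall_congr' fun d => ?_
  rw [Nat.mem_divisors, and_iff_left hn]
  refine imp_congr_right fun hd => ?_
  have hirr := cyclotomic.irreducible_rat (Nat.pos_of_dvd_of_pos hd (Nat.pos_of_ne_zero hn))
  rw [isCoprime_comm, hirr.coprime_iff_not_dvd]

section CirculantSingle

variable {G R : Type*} [AddGroup G] [Fintype G] [DecidableEq G] [Semiring R]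

theorem circulant_single_mul_circulant_single (g h : G) (a b : R) :
    circulant (Pi.single g a) * circulant (Pi.single h b) =
      circulant (Pi.single (g + h) (a * b)) := by
  rw [circulant_mul, mulVec_single]
  congr 1
  ext k
  simp [circulant_apply, Pi.single_apply, sub_eq_iff_eq_add]

theorem circulant_single_pow (g : G) (a : R) (m : ℕ) :
    circulant (Pi.single g a) ^ m = circulant (Pi.single (m • g) (a ^ m)) := by
  induction m with
  | zero => simp
  | succ m ih => rw [pow_succ, ih, circulant_single_mul_circulant_single, succ_nsmul, pow_succ]

end CirculantSingle

def cyclicShift (n : ℕ) [NeZero n] (R : Type*) [Zero R] [One R] : Matrix (Fin n) (Fin n) R :=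
  circulant (Pi.single 1 1)

section CyclicShift

open Fin.NatCast

variable {n : ℕ} [NeZero n]

theorem cyclicShift_pow {R : Type*} [Semiring R] (m : ℕ) :
    cyclicShift n R ^ m = circulant (Pi.single (m : Fin n) 1) := by
  rw [cyclicShift, circulant_single_pow, nsmul_one, one_pow]

theorem aeval_cyclicShift_C_mul_X_pow {R : Type*} [CommSemiring R] (c : R) (j : Fin n) :
    aeval (cyclicShift n R) (C c * X ^ (j : ℕ)) = circulant (Pi.single j c) := by
  rw [map_mul, aeval_C, map_pow, aeval_X, cyclicShift_pow, Fin.cast_val_eq_self,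
    Algebra.algebraMap_eq_smul_one, smul_one_mul, ← circulant_smul, ← Pi.single_smul',
    smul_eq_mul, mul_one]

theorem aeval_cyclicShift_sum {R : Type*} [CommSemiring R] (a : Fin n → R) :
    aeval (cyclicShift n R) (∑ j : Fin n, C (a j) * X ^ (j : ℕ)) = circulant a := by
  simp only [map_sum, aeval_cyclicShift_C_mul_X_pow]
  ext i k
  simp [Matrix.sum_apply, circulant_apply, Pi.single_apply]

theorem eq_zero_of_aeval_cyclicShift_eq_zero {R : Type*} [CommSemiring R] {q : R[X]}
    (hq : q.natDegree < n) (h : aeval (cyclicShift n R) q = 0) : q = 0 := by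
  rw [q.as_sum_range' n hq, ← Fin.sum_univ_eq_sum_range (fun i => monomial i (q.coeff i))] at h
  simp_rw [← C_mul_X_pow_eq_monomial] at h
  rw [aeval_cyclicShift_sum, ← circulant_zero, Fin.circulant_inj] at h
  ext j
  by_cases hj : j < n
  · exact congrFun h ⟨j, hj⟩
  · exact coeff_eq_zero_of_natDegree_lt (by omega)

theorem minpoly_cyclicShift (K : Type*) [Field K] : minpoly K (cyclicShift n K) = X ^ n - 1 := by
  have hmonic : (X ^ n - 1 : K[X]).Monic := by
    simpa using monic_X_pow_sub_C (1 : K) (NeZero.ne n)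
  refine (minpoly.unique K _ hmonic ?_ fun q hq hqx => ?_).symm
  · rw [map_sub, map_pow, aeval_X, map_one, cyclicShift_pow, Fin.natCast_self,
      circulant_single_one, sub_self]
  · rw [← C_1, degree_X_pow_sub_C (Nat.pos_of_ne_zero (NeZero.ne n))]
    by_contra! hdeg
    exact hq.ne_zero (eq_zero_of_aeval_cyclicShift_eq_zero
      ((natDegree_lt_iff_degree_lt hq.ne_zero).mpr hdeg) hqx)

end CyclicShift

theorem stmt_1 (n : ℕ) (hn : 1 ≤ n) (a : Fin n → ℚ) :
    (circulantMat a).det = 0 ↔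
      ∃ d : ℕ, d ∣ n ∧ cyclotomic d ℚ ∣ assocPoly a := by
  have : NeZero n := ⟨by omega⟩
  have hdet : (circulantMat a).det = (aeval (cyclicShift n ℚ) (assocPoly a)).det := by
    rw [circulantMat_eq_transpose_circulant, det_transpose, assocPoly, aeval_cyclicShift_sum]
  rw [hdet, ← not_iff_not, ← Ne, ← isUnit_iff_ne_zero, ← isUnit_iff_isUnit_det,
    isUnit_aeval_iff_isCoprime_minpoly (Matrix.isIntegral _), minpoly_cyclicShift,
    isCoprime_X_pow_sub_one_iff (by omega)]
  simp only [not_exists, not_and]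
end

section
/- Let k ≥ 1 and suppose 2k+1 = p·q for two distinct primes 3 ≤ p < q. Then every circulant matrix C(a_0,…,a_{2k}) of size (2k+1)×(2k+1) whose first row consists of exactly k entries equal to 1 and k+1 entries equal to 0 is nonsingular (has nonzero determinant). -/
open Finset IntermediateField Matrix Polynomial

theorem pow_val_add_of_pow_eq_one {M : Type*} [Monoid M] {n : ℕ} {w : M} (hw : w ^ n = 1)
    (x y : Fin n) : w ^ ((x + y : Fin n) : ℕ) = w ^ (x : ℕ) * w ^ (y : ℕ) := by
  rw [Fin.val_add, ← pow_eq_pow_mod _ hw, pow_add]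

theorem circulantMat_map_mul_vandermonde {K : Type*} [Field K] {n : ℕ} [NeZero n]
    (a : Fin n → ℚ) (v : Fin n → K) (hv : ∀ k, v k ^ n = 1) :
    (circulantMat a).map (Rat.cast : ℚ → K) * (vandermonde v)ᵀ =
      (vandermonde v)ᵀ * diagonal fun k => ∑ m, (a m : K) * v k ^ (m : ℕ) := by
  ext i k
  rw [Matrix.mul_apply, Matrix.mul_diagonal, Finset.mul_sum]
  refine Fintype.sum_equiv (Equiv.subRight i) _ _ fun j => ?_
  have hj : v k ^ (j : ℕ) = v k ^ (i : ℕ) * v k ^ ((j - i : Fin n) : ℕ) := by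
    rw [← pow_val_add_of_pow_eq_one (hv k), add_sub_cancel]
  simp [circulantMat, hj]
  ring

theorem det_circulantMat {K : Type*} [Field K] [CharZero K] {n : ℕ} [NeZero n] {ζ : K}
    (hζ : IsPrimitiveRoot ζ n) (a : Fin n → ℚ) :
    ((circulantMat a).det : K) = ∏ k : Fin n, ∑ m : Fin n, (a m : K) * (ζ ^ (k : ℕ)) ^ (m : ℕ) := by
  have hV : (vandermonde fun k : Fin n => ζ ^ (k : ℕ))ᵀ.det ≠ 0 := by
    rw [det_transpose, det_vandermonde_ne_zero_iff]
    exact fun x y hxy => Fin.ext (hζ.injOn_pow (by simp) (by simp) hxy)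
  have key := congrArg det <| circulantMat_map_mul_vandermonde a (fun k : Fin n => ζ ^ (k : ℕ))
    fun k => by rw [← pow_mul, mul_comm, pow_mul, hζ.pow_eq_one, one_pow]
  rw [det_mul, det_mul, det_diagonal, mul_comm] at key
  rw [← mul_left_cancel₀ hV key]
  exact (Rat.castHom K).map_det _

theorem det_circulantMat_ne_zero {n : ℕ} [NeZero n] (a : Fin n → ℚ)
    (h : ∀ z : ℂ, z ^ n = 1 → ∑ m : Fin n, (a m : ℂ) * z ^ (m : ℕ) ≠ 0) :
    (circulantMat a).det ≠ 0 := by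
  obtain ⟨ζ, hζ⟩ : ∃ ζ : ℂ, IsPrimitiveRoot ζ n :=
    ⟨_, Complex.isPrimitiveRoot_exp n (NeZero.ne n)⟩
  rw [← Rat.cast_ne_zero (α := ℂ), det_circulantMat hζ, prod_ne_zero_iff]
  exact fun k _ => h _ (by rw [← pow_mul, mul_comm, pow_mul, hζ.pow_eq_one, one_pow])

theorem sum_eq_card_filter_eq_one {ι R : Type*} [AddCommMonoidWithOne R] [DecidableEq R]
    (s : Finset ι) (f : ι → R) (hf : ∀ i ∈ s, f i = 0 ∨ f i = 1) :
    ∑ i ∈ s, f i = #{i ∈ s | f i = 1} := by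
  rw [natCast_card_filter]
  refine sum_congr rfl fun i hi => ?_
  rcases hf i hi with h | h <;> simp [h]

theorem eq_of_sum_algebraMap_mul_pow_eq_zero {K L : Type*} [Field K] [Field L] [Algebra K L]
    {m : ℕ} {η : L} (hη : η ^ m = 1) (hη1 : η ≠ 1) (hdeg : m - 1 ≤ (minpoly K η).natDegree)
    (c : Fin m → K) (h : ∑ i, algebraMap K L (c i) * η ^ (i : ℕ) = 0) (i j : Fin m) :
    c i = c j := by
  cases m with
  | zero => exact i.elim0
  | succ m =>
  have hind : LinearIndependent K fun i : Fin m => η ^ (i : ℕ) :=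
    (linearIndependent_pow η).comp (Fin.castLE hdeg) (Fin.castLE_injective _)
  have hgeom : ∑ i : Fin (m + 1), η ^ (i : ℕ) = 0 := by
    rw [Fin.sum_univ_eq_sum_range (η ^ ·), geom_sum_eq hη1, hη, sub_self, zero_div]
  have hrel : ∑ i : Fin m, (c i.castSucc - c (Fin.last m)) • η ^ (i : ℕ) = 0 := by
    rw [Fin.sum_univ_castSucc] at h hgeom
    simp only [Algebra.smul_def, map_sub, sub_mul, sum_sub_distrib, ← Finset.mul_sum]
    simp only [Fin.val_castSucc, Fin.val_last] at h hgeom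
    linear_combination h - algebraMap K L (c (Fin.last m)) * hgeom
  have hlast : ∀ i, c i = c (Fin.last m) := Fin.lastCases rfl fun i =>
    sub_eq_zero.mp (Fintype.linearIndependent_iff.mp hind _ hrel i)
  rw [hlast i, hlast j]

theorem sum_eq_mul_sum_of_sum_mul_pow_eq_zero {n P : ℕ} (hP : P.Prime) {z : ℂ}
    (hz : IsPrimitiveRoot z P) (a : Fin n → ℚ) (h : ∑ m, (a m : ℂ) * z ^ (m : ℕ) = 0) :
    ∑ m, a m = P * ∑ m with m.val % P = 0, a m := by
  let res : Fin n → Fin P := fun m => ⟨m % P, Nat.mod_lt _ hP.pos⟩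
  let c : Fin P → ℚ := fun r => ∑ m with res m = r, a m
  have hc : ∑ r, algebraMap ℚ ℂ (c r) * z ^ (r : ℕ) = 0 := by
    rw [← h, ← sum_fiberwise _ res]
    refine sum_congr rfl fun r _ => ?_
    rw [map_sum, sum_mul]
    refine sum_congr rfl fun m hm => ?_
    rw [← (mem_filter.mp hm).2, eq_ratCast]
    exact congrArg _ (pow_eq_pow_mod _ hz.pow_eq_one).symm
  have hdeg : P - 1 ≤ (minpoly ℚ z).natDegree := by
    rw [← cyclotomic_eq_minpoly_rat hz hP.pos, natDegree_cyclotomic, Nat.totient_prime hP]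
  have hconst := eq_of_sum_algebraMap_mul_pow_eq_zero hz.pow_eq_one
    (hz.ne_one hP.one_lt) hdeg c hc
  calc ∑ m, a m = ∑ r, c r := (sum_fiberwise _ res a).symm
    _ = P * c ⟨0, hP.pos⟩ := by simp [hconst _ ⟨0, hP.pos⟩]
    _ = P * ∑ m with m.val % P = 0, a m := by simp [c, res, Fin.ext_iff]

theorem totient_le_natDegree_minpoly_adjoin {p q : ℕ} [NeZero p] [NeZero q] (hpq : p.Coprime q)
    {η θ : ℂ} (hη : IsPrimitiveRoot η p) (hθ : IsPrimitiveRoot θ q) :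
    p.totient ≤ (minpoly ℚ⟮θ⟯ η).natDegree := by
  have hθint : IsIntegral ℚ θ := (hθ.isIntegral (NeZero.pos q)).tower_top
  have hηint : IsIntegral ℚ⟮θ⟯ η := (hη.isIntegral (NeZero.pos p)).tower_top
  let L := ℚ⟮θ⟯⟮η⟯
  have : FiniteDimensional ℚ ℚ⟮θ⟯ := adjoin.finiteDimensional hθint
  have : FiniteDimensional ℚ⟮θ⟯ L := adjoin.finiteDimensional hηint
  have : FiniteDimensional ℚ L := FiniteDimensional.trans ℚ ℚ⟮θ⟯ L
  have hθL : IsPrimitiveRoot (⟨θ, L.algebraMap_mem ⟨θ, mem_adjoin_simple_self ℚ θ⟩⟩ : L) q :=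
    IsPrimitiveRoot.coe_submonoidClass_iff.mp hθ
  have hηL : IsPrimitiveRoot (⟨η, mem_adjoin_simple_self _ η⟩ : L) p :=
    IsPrimitiveRoot.coe_submonoidClass_iff.mp hη
  have hL := hθL.lcm_totient_le_finrank hηL
    (cyclotomic.irreducible_rat (Nat.lcm_pos (NeZero.pos q) (NeZero.pos p)))
  rw [hpq.symm.lcm_eq_mul, Nat.totient_mul hpq.symm, ← Module.finrank_mul_finrank ℚ ℚ⟮θ⟯ L,
    adjoin.finrank hθint, adjoin.finrank hηint, ← cyclotomic_eq_minpoly_rat hθ (NeZero.pos q),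
    natDegree_cyclotomic] at hL
  exact Nat.le_of_mul_le_mul_left hL (Nat.totient_pos.mpr (NeZero.pos q))

theorem add_eq_add_of_sum_mul_pow_mul_pow_eq_zero {p q : ℕ} (hp : p.Prime) (hq : q.Prime)
    (hpq : p ≠ q) {η θ : ℂ} (hη : IsPrimitiveRoot η p) (hθ : IsPrimitiveRoot θ q)
    (ε : Fin p → Fin q → ℚ)
    (h : ∑ i : Fin p, ∑ j : Fin q, (ε i j : ℂ) * η ^ (i : ℕ) * θ ^ (j : ℕ) = 0)
    (i i' : Fin p) (j j' : Fin q) : ε i j + ε i' j' = ε i j' + ε i' j := by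
  have : NeZero p := ⟨hp.ne_zero⟩
  have : NeZero q := ⟨hq.ne_zero⟩
  let t : ℚ⟮θ⟯ := ⟨θ, mem_adjoin_simple_self ℚ θ⟩
  let T : Fin p → ℚ⟮θ⟯ := fun i => ∑ j, (ε i j : ℚ⟮θ⟯) * t ^ (j : ℕ)
  have hT : ∀ i, algebraMap ℚ⟮θ⟯ ℂ (T i) = ∑ j, (ε i j : ℂ) * θ ^ (j : ℕ) := fun i => by
    simp [T, t]
  have hTeq : T i = T i' := by
    refine eq_of_sum_algebraMap_mul_pow_eq_zero hη.pow_eq_one (hη.ne_one hp.one_lt) ?_ T ?_ i i'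
    · simpa [Nat.totient_prime hp] using
        totient_le_natDegree_minpoly_adjoin ((Nat.coprime_primes hp hq).mpr hpq) hη hθ
    · simpa [hT, sum_mul, mul_right_comm] using h
  have hdiff : ∑ j, algebraMap ℚ ℂ (ε i j - ε i' j) * θ ^ (j : ℕ) = 0 := by
    have := congrArg (algebraMap ℚ⟮θ⟯ ℂ) hTeq
    rw [hT, hT] at this
    simp [sub_mul, sum_sub_distrib, this]
  have hdeg : q - 1 ≤ (minpoly ℚ θ).natDegree := by
    rw [← cyclotomic_eq_minpoly_rat hθ hq.pos, natDegree_cyclotomic, Nat.totient_prime hq]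
  linarith [eq_of_sum_algebraMap_mul_pow_eq_zero hθ.pow_eq_one (hθ.ne_one hq.one_lt) hdeg _
    hdiff j j']

theorem forall_eq_or_forall_eq_of_add_eq_add {α β : Type*} (ε : α → β → ℚ)
    (h01 : ∀ i j, ε i j = 0 ∨ ε i j = 1)
    (hrect : ∀ i i' j j', ε i j + ε i' j' = ε i j' + ε i' j) :
    (∀ i i' j, ε i j = ε i' j) ∨ (∀ i j j', ε i j = ε i j') := by
  by_contra! ⟨⟨i, i', j, hj⟩, ⟨i₀, j₁, j₂, hi₀⟩⟩
  have hcompl : ∀ i j i' j', ε i j ≠ ε i' j' → ε i j + ε i' j' = 1 := fun i j i' j' hne => by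
    rcases h01 i j with h | h <;> rcases h01 i' j' with h' | h' <;> simp_all
  -- rows `i` and `i'` are non-constant like row `i₀`, and complementary since they differ at `j`
  have hi : ε i j₁ ≠ ε i j₂ := fun he => hi₀ (by linarith [hrect i i₀ j₁ j₂])
  have hi' : ε i' j₁ ≠ ε i' j₂ := fun he => hi₀ (by linarith [hrect i' i₀ j₁ j₂])
  exact hj (by linarith [hcompl _ _ _ _ hi, hcompl _ _ _ _ hi', hrect i i' j₁ j₂, hrect i i' j j₁])

def crtIndex (p q : ℕ) [NeZero p] [NeZero q] (x : Fin p × Fin q) : Fin (p * q) :=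
  ⟨(q * x.1 + p * x.2) % (p * q), Nat.mod_lt _ (Nat.pos_of_ne_zero (NeZero.ne _))⟩

theorem crtIndex_bijective {p q : ℕ} [NeZero p] [NeZero q] (hpq : p.Coprime q) :
    Function.Bijective (crtIndex p q) := by
  refine (Fintype.bijective_iff_injective_and_card _).mpr ⟨fun x y hxy => ?_, by simp⟩
  have h : q * x.1 + p * x.2 ≡ q * y.1 + p * y.2 [MOD p * q] := congrArg Fin.val hxy
  have h₁ : q * x.1 ≡ q * y.1 [MOD p] := by
    simpa [Nat.ModEq, Nat.add_mul_mod_self_left] using h.of_mul_right q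
  have h₂ : p * x.2 ≡ p * y.2 [MOD q] := by
    simpa [Nat.ModEq, Nat.add_mul_mod_self_left] using h.of_mul_left p
  exact Prod.ext (Fin.ext ((h₁.cancel_left_of_coprime hpq).eq_of_lt_of_lt x.1.2 y.1.2))
    (Fin.ext ((h₂.cancel_left_of_coprime hpq.symm).eq_of_lt_of_lt x.2.2 y.2.2))

theorem pow_crtIndex {M : Type*} [CommMonoid M] {p q : ℕ} [NeZero p] [NeZero q] {z : M}
    (hz : z ^ (p * q) = 1) (x : Fin p × Fin q) :
    z ^ (crtIndex p q x : ℕ) = (z ^ q) ^ (x.1 : ℕ) * (z ^ p) ^ (x.2 : ℕ) := by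
  rw [crtIndex, ← pow_eq_pow_mod _ hz, pow_add, pow_mul, pow_mul]

theorem exists_sum_eq_mul_of_isPrimitiveRoot_mul {p q : ℕ} (hp : p.Prime) (hq : q.Prime)
    (hpq : p ≠ q) {z : ℂ} (hz : IsPrimitiveRoot z (p * q)) (a : Fin (p * q) → ℚ)
    (ha : ∀ m, a m = 0 ∨ a m = 1) (h : ∑ m, (a m : ℂ) * z ^ (m : ℕ) = 0) :
    ∃ N : ℕ, ∑ m, a m = p * N ∨ ∑ m, a m = q * N := by
  have : NeZero p := ⟨hp.ne_zero⟩
  have : NeZero q := ⟨hq.ne_zero⟩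
  have hbij := crtIndex_bijective ((Nat.coprime_primes hp hq).mpr hpq)
  let ε : Fin p → Fin q → ℚ := fun i j => a (crtIndex p q (i, j))
  have hε : ∀ i j, ε i j = 0 ∨ ε i j = 1 := fun _ _ => ha _
  have hsum : ∑ m, a m = ∑ i, ∑ j, ε i j := by
    rw [← Fintype.sum_prod_type', Fintype.sum_bijective _ hbij _ _ fun _ => rfl]
  have hpos : 0 < p * q := Nat.mul_pos hp.pos hq.pos
  have hrect := add_eq_add_of_sum_mul_pow_mul_pow_eq_zero hp hq hpq
    (hz.pow hpos (mul_comm p q)) (hz.pow hpos rfl) ε <| by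
      rw [← h, ← Fintype.sum_bijective _ hbij _ _ fun _ => rfl, Fintype.sum_prod_type]
      simp [ε, pow_crtIndex hz.pow_eq_one, mul_assoc]
  rcases forall_eq_or_forall_eq_of_add_eq_add ε hε hrect with hcol | hrow
  · refine ⟨#{j | ε 0 j = 1}, Or.inl ?_⟩
    rw [hsum, ← sum_eq_card_filter_eq_one _ _ fun j _ => hε 0 j]
    simp only [hcol _ 0, sum_const, card_univ, Fintype.card_fin, nsmul_eq_mul]
  · refine ⟨#{i | ε i 0 = 1}, Or.inr ?_⟩
    rw [hsum, ← sum_eq_card_filter_eq_one _ _ fun i _ => hε i 0, mul_sum]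
    simp only [hrow _ _ 0, sum_const, card_univ, Fintype.card_fin, nsmul_eq_mul]

theorem exists_sum_eq_mul_of_sum_mul_pow_eq_zero {n p q : ℕ} (hp : p.Prime) (hq : q.Prime)
    (hpq : p ≠ q) (hn : n = p * q) (a : Fin n → ℚ) (ha : ∀ m, a m = 0 ∨ a m = 1) {z : ℂ}
    (hz : z ^ n = 1) (h : ∑ m, (a m : ℂ) * z ^ (m : ℕ) = 0) :
    ∃ N : ℕ, ∑ m, a m = p * N ∨ ∑ m, a m = q * N := by
  subst hn
  have prime_case : ∀ P : ℕ, P.Prime → IsPrimitiveRoot z P → ∃ N : ℕ, ∑ m, a m = P * N :=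
    fun P hP hzP => ⟨_, (sum_eq_mul_sum_of_sum_mul_pow_eq_zero hP hzP a h).trans <| by
      rw [sum_eq_card_filter_eq_one _ _ fun m _ => ha m]⟩
  have hz' := IsPrimitiveRoot.orderOf z
  obtain ⟨d₁, d₂, hd₁, hd₂, hd⟩ := Nat.dvd_mul.mp (orderOf_dvd_of_pow_eq_one hz)
  rcases hp.eq_one_or_self_of_dvd d₁ hd₁ with h₁ | h₁ <;>
    rcases hq.eq_one_or_self_of_dvd d₂ hd₂ with h₂ | h₂ <;>
    rw [← hd, h₁, h₂] at hz'
  · rw [(IsPrimitiveRoot.one_right_iff (ζ := z)).mp (by simpa using hz')] at h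
    exact ⟨0, Or.inl (by exact_mod_cast (by simpa using h : ∑ m, (a m : ℂ) = 0))⟩
  · exact (prime_case q hq (by simpa using hz')).imp fun _ => Or.inr
  · exact (prime_case p hp (by simpa using hz')).imp fun _ => Or.inl
  · exact exists_sum_eq_mul_of_isPrimitiveRoot_mul hp hq hpq hz' a ha h

theorem stmt_5_general (k p q : ℕ) (hp : p.Prime) (hq : q.Prime)
    (hpq : p < q) (hfac : 2 * k + 1 = p * q)
    (a : Fin (2 * k + 1) → ℚ)
    (ha : ∀ j, a j = 0 ∨ a j = 1)
    (hcard : (Finset.univ.filter fun j => a j = 1).card = k) :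
    (circulantMat a).det ≠ 0 := by
  have hsum : ∑ m, a m = k := by rw [sum_eq_card_filter_eq_one _ _ fun m _ => ha m, hcard]
  have not_dvd : ∀ P N : ℕ, 1 < P → P ∣ 2 * k + 1 → (k : ℚ) ≠ P * N := by
    intro P N hP hdvd hk
    have hk : k = P * N := by exact_mod_cast hk
    have : P ∣ 1 := (Nat.dvd_add_right (hk ▸ (dvd_mul_right P N).mul_left 2)).mp hdvd
    exact hP.ne' (Nat.dvd_one.mp this)
  refine det_circulantMat_ne_zero a fun z hz hf => ?_
  obtain ⟨N, hN | hN⟩ := exists_sum_eq_mul_of_sum_mul_pow_eq_zero hp hq hpq.ne hfac a ha hz hf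
  · exact not_dvd p N hp.one_lt (hfac ▸ dvd_mul_right p q) (hsum ▸ hN)
  · exact not_dvd q N hq.one_lt (hfac ▸ dvd_mul_left q p) (hsum ▸ hN)

theorem stmt_5 (k p q : ℕ) (hk : 1 ≤ k) (hp : p.Prime) (hq : q.Prime)
    (hp3 : 3 ≤ p) (hpq : p < q) (hfac : 2 * k + 1 = p * q)
    (a : Fin (2 * k + 1) → ℚ)
    (ha : ∀ j, a j = 0 ∨ a j = 1)
    (hcard : (Finset.univ.filter fun j => a j = 1).card = k) :
    (circulantMat a).det ≠ 0 :=
  stmt_5_general k p q hp hq hpq hfac a ha hcard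
end

section
/- Let k ≥ 1 and suppose 2k+1 = p·q·r where 3 ≤ p < q are two distinct primes and r ≥ 3 is an odd integer. Then there exists a circulant matrix C(a_0,…,a_{2k}) of size (2k+1)×(2k+1) whose first row consists of exactly k entries equal to 1 and k+1 entries equal to 0 which is singular (has determinant zero). -/
lemma sum_range_mul' {M : Type*} [AddCommMonoid M] (f : ℕ → M) (m n : ℕ) :
    ∑ i ∈ Finset.range (m * n), f i
      = ∑ x ∈ Finset.range m, ∑ y ∈ Finset.range n, f (x * n + y) := by
  induction m with
  | zero => simp
  | succ m ih =>
    rw [Nat.succ_mul, Finset.sum_range_add, ih, Finset.sum_range_succ]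

lemma sum_ite_threshold {M : Type*} [AddCommMonoid M] (R g : ℕ) (h : g ≤ R) (u v : M) :
    ∑ x ∈ Finset.range R, (if x < g then u else v) = g • u + (R - g) • v := by
  obtain ⟨d, rfl⟩ := Nat.exists_eq_add_of_le h
  rw [Finset.sum_range_add]
  congr 1
  · rw [Finset.sum_congr rfl fun x hx => if_pos (Finset.mem_range.mp hx)]
    simp
  · rw [Finset.sum_congr rfl fun x _ => if_neg (by omega)]
    simp

lemma divmod_aux (N x y : ℕ) (hN : 0 < N) (hy : y < N) :
    (x * N + y) % N = y ∧ (x * N + y) / N = x := by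
  constructor
  · rw [add_comm, Nat.add_mul_mod_self_right, Nat.mod_eq_of_lt hy]
  · rw [add_comm, Nat.add_mul_div_right _ _ hN, Nat.div_eq_of_lt hy, zero_add]

lemma modsum_eq_zero {ζ : ℂ} (m N : ℕ) (hN : 0 < N) (g : ℕ → ℂ)
    (h : ∑ x ∈ Finset.range m, (ζ ^ N) ^ x = 0) :
    ∑ t ∈ Finset.range (m * N), g (t % N) * ζ ^ t = 0 := by
  rw [sum_range_mul']
  have : ∀ x ∈ Finset.range m, ∑ y ∈ Finset.range N, g ((x * N + y) % N) * ζ ^ (x * N + y)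
      = (ζ ^ N) ^ x * ∑ y ∈ Finset.range N, g y * ζ ^ y := by
    intro x _
    rw [Finset.mul_sum]
    refine Finset.sum_congr rfl fun y hy => ?_
    rw [(divmod_aux N x y hN (Finset.mem_range.mp hy)).1, pow_add, pow_mul]
    ring
  rw [Finset.sum_congr rfl this, ← Finset.sum_mul, h, zero_mul]

lemma main_aux (k p q r s' u v α b : ℕ) (hp1 : 1 < p) (hq1 : 1 < q)
    (hα : α ≤ q) (hb : b ≤ p) (hu : u ≤ 1) (hv : v ≤ 1)
    (hfac : 2 * k + 1 = p * q * r) (hr : s' + 2 ≤ r)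
    (hcount : p * q * s' + (b * u + (p - b) * v) * q + α * p = k) :
    ∃ a : Fin (2 * k + 1) → ℚ,
      (∀ j, a j = 0 ∨ a j = 1) ∧
      (Finset.univ.filter fun j => a j = 1).card = k ∧
      (circulantMat a).det = 0 := by
  set n := 2 * k + 1 with hn
  set N := p * q with hN
  have hp0 : 0 < p := by omega
  have hq0 : 0 < q := by omega
  have hN1 : 1 < N := by calc 1 = 1 * 1 := by ring
                          _ < p * q := by exact Nat.mul_lt_mul'' hp1 hq1
  have hN0 : 0 < N := by omega
  have hn0 : 0 < n := by omega
  have hnNr : n = r * N := by rw [hfac, mul_comm]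
  -- the residue-count function
  set c : ℕ → ℕ := fun t => s' + (if t % p < b then u else v) + (if t % q < α then 1 else 0)
    with hc
  have hcr : ∀ t, c t ≤ r := by
    intro t; rw [hc]; dsimp only; split <;> split <;> omega
  -- sum of c over range N is k
  have hsum : ∑ t ∈ Finset.range N, c t = k := by
    rw [hc]
    simp only
    rw [Finset.sum_add_distrib, Finset.sum_add_distrib, Finset.sum_const,
      Finset.card_range]
    have h1 : ∑ t ∈ Finset.range N, (if t % p < b then u else v) = q * (b * u + (p - b) * v) := by
      rw [show N = q * p by rw [hN]; ring, sum_range_mul']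
      have : ∀ x ∈ Finset.range q, ∑ y ∈ Finset.range p, (if (x * p + y) % p < b then u else v)
          = b * u + (p - b) * v := by
        intro x _
        rw [Finset.sum_congr rfl fun y hy => by
          rw [(divmod_aux p x y hp0 (Finset.mem_range.mp hy)).1]]
        rw [sum_ite_threshold p b hb u v, smul_eq_mul, smul_eq_mul]
      rw [Finset.sum_congr rfl this, Finset.sum_const, Finset.card_range, smul_eq_mul]
    have h2 : ∑ t ∈ Finset.range N, (if t % q < α then 1 else 0) = p * α := by
      rw [hN, sum_range_mul']
      have : ∀ x ∈ Finset.range p, ∑ y ∈ Finset.range q, (if (x * q + y) % q < α then 1 else 0)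
          = α := by
        intro x _
        rw [Finset.sum_congr rfl fun y hy => by
          rw [(divmod_aux q x y hq0 (Finset.mem_range.mp hy)).1]]
        rw [sum_ite_threshold q α hα 1 0, smul_eq_mul, smul_eq_mul]
        omega
      rw [Finset.sum_congr rfl this, Finset.sum_const, Finset.card_range, smul_eq_mul]
    rw [h1, h2, smul_eq_mul]
    rw [← hcount, hN]
    ring
  -- the 0/1 vector
  refine ⟨fun j => if (j : ℕ) / N < c ((j : ℕ) % N) then 1 else 0, fun j => by
    dsimp only; split <;> simp, ?_, ?_⟩
  · -- cardinality
    have key : ∀ j : Fin n,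
        ((if (j : ℕ) / N < c ((j : ℕ) % N) then (1:ℚ) else 0) = 1)
          ↔ ((j : ℕ) / N < c ((j : ℕ) % N)) := by
      intro j; split <;> simp_all
    rw [Finset.card_filter]
    have : ∀ j ∈ Finset.univ (α := Fin n),
        (if (if (j : ℕ) / N < c ((j : ℕ) % N) then (1:ℚ) else 0) = 1 then 1 else 0)
          = (fun t : ℕ => if t / N < c (t % N) then 1 else 0) (j : ℕ) := by
      intro j _
      dsimp only
      rw [if_congr (key j) rfl rfl]
    rw [Finset.sum_congr rfl this,
      Fin.sum_univ_eq_sum_range (fun t : ℕ => if t / N < c (t % N) then 1 else 0) n,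
      hnNr, sum_range_mul']
    have : ∀ x ∈ Finset.range r, ∀ y ∈ Finset.range N,
        (if (x * N + y) / N < c ((x * N + y) % N) then 1 else 0)
          = (if x < c y then 1 else 0) := by
      intro x _ y hy
      obtain ⟨h1, h2⟩ := divmod_aux N x y hN0 (Finset.mem_range.mp hy)
      rw [h1, h2]
    rw [Finset.sum_congr rfl fun x hx => Finset.sum_congr rfl (this x hx), Finset.sum_comm]
    have : ∀ y ∈ Finset.range N, ∑ x ∈ Finset.range r, (if x < c y then 1 else 0) = c y := by
      intro y _
      rw [sum_ite_threshold r (c y) (hcr y) 1 0, smul_eq_mul, smul_eq_mul]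
      omega
    rw [Finset.sum_congr rfl this, hsum]
  · -- determinant
    haveI : NeZero n := ⟨by omega⟩
    have hζ0 : IsPrimitiveRoot (Complex.exp (2 * Real.pi * Complex.I / N)) N :=
      Complex.isPrimitiveRoot_exp N (by omega)
    set ζ : ℂ := Complex.exp (2 * Real.pi * Complex.I / N) with hζdef
    have hζq : IsPrimitiveRoot (ζ ^ q) p := hζ0.pow hN0 (by rw [hN, mul_comm])
    have hζp : IsPrimitiveRoot (ζ ^ p) q := hζ0.pow hN0 hN
    have G1 : ∑ x ∈ Finset.range p, (ζ ^ q) ^ x = 0 := hζq.geom_sum_eq_zero hp1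
    have G2 : ∑ x ∈ Finset.range q, (ζ ^ p) ^ x = 0 := hζp.geom_sum_eq_zero hq1
    have hζN : ζ ^ N = 1 := hζ0.pow_eq_one
    have hζn : ζ ^ n = 1 := by rw [hnNr, mul_comm, pow_mul, hζN, one_pow]
    have hmod : ∀ m : ℕ, ζ ^ (m % n) = ζ ^ m := by
      intro m
      conv_rhs => rw [← Nat.div_add_mod m n]
      rw [pow_add, pow_mul, hζn, one_pow, one_mul]
    have hS : ∑ y ∈ Finset.range N, (c y : ℂ) * ζ ^ y = 0 := by
      have expand : ∀ y, (c y : ℂ) * ζ ^ y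
          = (s' : ℂ) * ζ ^ y + (((if y % p < b then u else v : ℕ)) : ℂ) * ζ ^ y
            + (((if y % q < α then 1 else 0 : ℕ)) : ℂ) * ζ ^ y := by
        intro y; rw [hc]; push_cast; ring
      rw [Finset.sum_congr rfl fun y _ => expand y, Finset.sum_add_distrib,
        Finset.sum_add_distrib]
      have T1 : ∑ y ∈ Finset.range N, (s' : ℂ) * ζ ^ y = 0 := by
        rw [hN]
        exact modsum_eq_zero p q hq0 (fun _ => (s' : ℂ)) G1
      have T2 : ∑ y ∈ Finset.range N, (((if y % p < b then u else v : ℕ)) : ℂ) * ζ ^ y = 0 := by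
        rw [show N = q * p from by rw [hN, mul_comm]]
        exact modsum_eq_zero q p hp0 (fun y => (((if y < b then u else v : ℕ)) : ℂ)) G2
      have T3 : ∑ y ∈ Finset.range N, (((if y % q < α then 1 else 0 : ℕ)) : ℂ) * ζ ^ y = 0 := by
        rw [hN]
        exact modsum_eq_zero p q hq0 (fun y => (((if y < α then 1 else 0 : ℕ)) : ℂ)) G1
      rw [T1, T2, T3]; ring
    set a : Fin n → ℚ := fun j => if (j : ℕ) / N < c ((j : ℕ) % N) then 1 else 0 with ha
    have hSn : ∑ j : Fin n, ((a j : ℚ) : ℂ) * ζ ^ (j : ℕ) = 0 := by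
      have haj : ∀ j : Fin n, ((a j : ℚ) : ℂ)
          = (fun t : ℕ => if t / N < c (t % N) then (1 : ℂ) else 0) (j : ℕ) := by
        intro j; rw [ha]; dsimp only; split <;> simp
      rw [Finset.sum_congr rfl fun j _ => by rw [haj j],
        Fin.sum_univ_eq_sum_range
          (fun t : ℕ => (if t / N < c (t % N) then (1 : ℂ) else 0) * ζ ^ t) n,
        hnNr, sum_range_mul']
      have step : ∀ x ∈ Finset.range r, ∀ y ∈ Finset.range N,
          (if (x * N + y) / N < c ((x * N + y) % N) then (1 : ℂ) else 0) * ζ ^ (x * N + y)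
            = (if x < c y then (1 : ℂ) else 0) * ζ ^ y := by
        intro x _ y hy
        obtain ⟨h1, h2⟩ := divmod_aux N x y hN0 (Finset.mem_range.mp hy)
        rw [h1, h2, pow_add, pow_mul', hζN, one_pow, one_mul]
      rw [Finset.sum_congr rfl fun x hx => Finset.sum_congr rfl (step x hx), Finset.sum_comm]
      have step2 : ∀ y ∈ Finset.range N,
          ∑ x ∈ Finset.range r, (if x < c y then (1 : ℂ) else 0) * ζ ^ y
            = (c y : ℂ) * ζ ^ y := by
        intro y _
        rw [← Finset.sum_mul, sum_ite_threshold r (c y) (hcr y) (1 : ℂ) 0]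
        simp
      rw [Finset.sum_congr rfl step2, hS]
    have hdetC : ((circulantMat a).map (Rat.castHom ℂ)).det = 0 := by
      rw [← Matrix.exists_mulVec_eq_zero_iff]
      refine ⟨fun i => ζ ^ (i : ℕ), ?_, ?_⟩
      · intro h0
        have h1 := congrFun h0 ⟨0, hn0⟩
        simp at h1
      · funext i
        simp only [Matrix.mulVec, dotProduct, Matrix.map_apply, circulantMat,
          Matrix.of_apply, Pi.zero_apply, Rat.coe_castHom]
        calc ∑ j : Fin n, ((a (j - i) : ℚ) : ℂ) * ζ ^ ((j : Fin n) : ℕ)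
            = ∑ m : Fin n, ((a (m + i - i) : ℚ) : ℂ) * ζ ^ ((m + i : Fin n) : ℕ) :=
              (Equiv.sum_comp (Equiv.addRight i)
                (fun j : Fin n => ((a (j - i) : ℚ) : ℂ) * ζ ^ (j : ℕ))).symm
          _ = ∑ m : Fin n, ((a m : ℚ) : ℂ) * ζ ^ (m : ℕ) * ζ ^ (i : ℕ) := by
              refine Finset.sum_congr rfl fun m _ => ?_
              rw [add_sub_cancel_right, Fin.add_def]
              dsimp only
              rw [hmod, pow_add]
              ring
          _ = 0 := by rw [← Finset.sum_mul, hSn, zero_mul]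
    have h2 := RingHom.map_det (Rat.castHom ℂ) (circulantMat a)
    rw [RingHom.mapMatrix_apply, hdetC] at h2
    exact (map_eq_zero_iff (Rat.castHom ℂ) Rat.cast_injective).mp h2

theorem stmt_6 (k p q r : ℕ) (hk : 1 ≤ k) (hp : p.Prime) (hq : q.Prime)
    (hp3 : 3 ≤ p) (hpq : p < q) (hr3 : 3 ≤ r) (hodd : Odd r)
    (hfac : 2 * k + 1 = p * q * r) :
    ∃ a : Fin (2 * k + 1) → ℚ,
      (∀ j, a j = 0 ∨ a j = 1) ∧
      (Finset.univ.filter fun j => a j = 1).card = k ∧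
      (circulantMat a).det = 0 := by
  have hp1 : 1 < p := by omega
  have hq1 : 1 < q := by omega
  have hpodd : Odd p := hp.odd_of_ne_two (by omega)
  have hqodd : Odd q := hq.odd_of_ne_two (by omega)
  obtain ⟨M, hM⟩ : ∃ M, p * q = 2 * M + 1 := by
    obtain ⟨m, hm⟩ := hpodd.mul hqodd
    exact ⟨m, by omega⟩
  obtain ⟨s, hs⟩ := hodd
  have hs1 : 1 ≤ s := by omega
  have hks : k = p * q * s + M := by
    have h1 : 2 * k + 1 = 2 * ((2 * M + 1) * s + M) + 1 := by rw [hfac, hM, hs]; ring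
    have h2 : p * q * s = (2 * M + 1) * s := by rw [hM]
    set X := (2 * M + 1) * s with hX
    omega
  haveI : Fact q.Prime := ⟨hq⟩
  have hpq0 : (p : ZMod q) ≠ 0 := by
    rw [Ne, ZMod.natCast_eq_zero_iff]
    intro hdvd
    have := Nat.le_of_dvd (by omega) hdvd
    omega
  set α := ((M : ZMod q) * (p : ZMod q)⁻¹).val with hαdef
  have hαq : α < q := ZMod.val_lt _
  have hcong : α * p ≡ M [MOD q] := by
    rw [← ZMod.natCast_eq_natCast_iff]
    push_cast
    rw [hαdef, ZMod.natCast_val, ZMod.cast_id, mul_assoc, inv_mul_cancel₀ hpq0, mul_one]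
  rcases le_or_gt (α * p) M with hle | hlt
  · -- case 1 : M = α*p + q*b
    obtain ⟨b, hbdef⟩ := (Nat.modEq_iff_dvd' hle).mp hcong
    have hqbM : q * b ≤ M := hbdef ▸ Nat.sub_le M (α * p)
    have hbM : M = α * p + q * b := by omega
    have hbp : b ≤ p := by
      by_contra hcon
      push_neg at hcon
      have h2 : q * (p + 1) ≤ q * b := Nat.mul_le_mul_left q hcon
      nlinarith
    refine main_aux k p q r s 1 0 α b hp1 hq1 (le_of_lt hαq) hbp le_rfl (by omega) hfac
      (by omega) ?_
    simp only [mul_one, mul_zero, add_zero]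
    rw [hks, hbM]
    ring
  · -- case 2 : α*p = M + q*b
    obtain ⟨b, hbdef⟩ := (Nat.modEq_iff_dvd' (le_of_lt hlt)).mp hcong.symm
    have hbM : α * p = M + q * b := by
      have := Nat.sub_eq_iff_eq_add (le_of_lt hlt) |>.mp hbdef
      omega
    have hbp : b ≤ p := by
      have h1 : q * b ≤ q * p := by
        calc q * b ≤ M + q * b := Nat.le_add_left _ _
          _ = α * p := hbM.symm
          _ ≤ q * p := Nat.mul_le_mul_right p (le_of_lt hαq)
      exact Nat.le_of_mul_le_mul_left h1 (by omega)
    refine main_aux k p q r (s - 1) 0 1 α b hp1 hq1 (le_of_lt hαq) hbp (by omega) le_rfl hfac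
      (by omega) ?_
    simp only [mul_one, mul_zero, zero_add]
    obtain ⟨s', rfl⟩ : ∃ s', s = s' + 1 := ⟨s - 1, by omega⟩
    obtain ⟨d, rfl⟩ := Nat.exists_eq_add_of_le hbp
    rw [hks, hbM, Nat.add_sub_cancel, Nat.add_sub_cancel_left]
    ring
end

section
/- Let E := {0, 9, 18, 27, 36, 3, 12, 21, 30, 39, 1, 16, 31, 2, 17, 32, 4, 19, 34, 5, 20, 35} ⊆ {0,1,…,44}, and define a : Fin 45 → ℚ by a_j = 1 if j ∈ E and a_j = 0 otherwise. Then the 45×45 circulant matrix C(a_0,…,a_{44}) is singular (has determinant zero); its first row has exactly 22 ones and 23 zeros. -/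
/-- The exceptional index set `E₂₂ ⊆ {0, …, 44}`. -/
def E22 : Finset ℕ :=
  {0, 9, 18, 27, 36, 3, 12, 21, 30, 39, 1, 16, 31, 2, 17, 32, 4, 19, 34, 5, 20, 35}

/-!
Index by `ℤ/45`. The first row is `1_{0,3} ∗ 1_⟨9⟩ + 1_{1,2,4,5} ∗ 1_⟨15⟩` (convolution), and a
circulant whose first row is `b ∗ 1_S` kills every vector whose sums over the translates `x + S`
vanish. The vector `v = 1_{15,18,21} - 1_{0,3,6}` has this property for both subgroups `⟨9⟩` and
`⟨15⟩`, since `15 ∈ ⟨15⟩` and `{0,3,6} + ⟨9⟩ = ⟨3⟩ ∋ 15`; so `v ≠ 0` lies in the kernel.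
-/

open Finset Matrix

theorem sum_indicator_sub_indicator_eq_zero {G : Type*} [Add G] [DecidableEq G]
    {P N S : Finset G} (x : G)
    (h : #{s ∈ S | x + s ∈ P} = #{s ∈ S | x + s ∈ N}) :
    ∑ s ∈ S, ((if x + s ∈ P then 1 else 0) - (if x + s ∈ N then 1 else 0) : ℚ) = 0 := by
  rw [sum_sub_distrib, sum_boole, sum_boole, h, sub_self]

section Circulant

variable {n : ℕ}

theorem circulantMat_add (a b : Fin n → ℚ) :
    circulantMat (a + b) = circulantMat a + circulantMat b :=
  rfl

variable [NeZero n]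

theorem circulantMat_mulVec_apply (a v : Fin n → ℚ) (i : Fin n) :
    (circulantMat a *ᵥ v) i = ∑ j, a j * v (i + j) := by
  simp only [mulVec, dotProduct, circulantMat, of_apply]
  exact (Fintype.sum_equiv (Equiv.addLeft i) _ _ fun k => by simp).symm

theorem circulantMat_mulVec_eq_zero_of_sum_translate_eq_zero (b v : Fin n → ℚ)
    (S : Finset (Fin n)) (hv : ∀ x, ∑ s ∈ S, v (x + s) = 0) :
    circulantMat (fun j => ∑ s ∈ S, b (j - s)) *ᵥ v = 0 := by
  funext i
  rw [Pi.zero_apply, circulantMat_mulVec_apply]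
  calc ∑ j, (∑ s ∈ S, b (j - s)) * v (i + j)
      = ∑ s ∈ S, ∑ j, b (j - s) * v (i + j) := by
        simp only [sum_mul]; exact sum_comm
    _ = ∑ s ∈ S, ∑ k, b k * v (i + k + s) := by
        refine sum_congr rfl fun s _ => (Fintype.sum_equiv (Equiv.addRight s) _ _ fun k => ?_).symm
        simp [add_assoc]
    _ = ∑ k, b k * ∑ s ∈ S, v (i + k + s) := by
        rw [sum_comm]; simp only [mul_sum]
    _ = 0 := by simp [hv]

end Circulant

def multiplesOf9 : Finset (Fin 45) := {0, 9, 18, 27, 36}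

def multiplesOf15 : Finset (Fin 45) := {0, 15, 30}

def E22Row : Fin 45 → ℚ := fun j => if (j : ℕ) ∈ E22 then 1 else 0

def E22KernelVec : Fin 45 → ℚ := fun j =>
  (if j ∈ ({15, 18, 21} : Finset (Fin 45)) then 1 else 0) -
    (if j ∈ ({0, 3, 6} : Finset (Fin 45)) then 1 else 0)

theorem E22Row_eq :
    E22Row = (fun j => ∑ s ∈ multiplesOf9, if j - s ∈ ({0, 3} : Finset (Fin 45)) then 1 else 0) +
      (fun j => ∑ s ∈ multiplesOf15, if j - s ∈ ({1, 2, 4, 5} : Finset (Fin 45)) then 1 else 0) := by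
  have hcount : ∀ j : Fin 45, (if (j : ℕ) ∈ E22 then 1 else 0) =
      #{s ∈ multiplesOf9 | j - s ∈ ({0, 3} : Finset (Fin 45))} +
        #{s ∈ multiplesOf15 | j - s ∈ ({1, 2, 4, 5} : Finset (Fin 45))} := by
    decide
  funext j
  simp only [E22Row, Pi.add_apply, sum_boole]
  exact_mod_cast hcount j

theorem E22KernelVec_sum_translate_multiplesOf9 (x : Fin 45) :
    ∑ s ∈ multiplesOf9, E22KernelVec (x + s) = 0 := by
  refine sum_indicator_sub_indicator_eq_zero x ?_
  revert x
  decide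

theorem E22KernelVec_sum_translate_multiplesOf15 (x : Fin 45) :
    ∑ s ∈ multiplesOf15, E22KernelVec (x + s) = 0 := by
  refine sum_indicator_sub_indicator_eq_zero x ?_
  revert x
  decide

theorem E22KernelVec_ne_zero : E22KernelVec ≠ 0 :=
  fun h => by simpa [E22KernelVec] using congrFun h 15

theorem circulantMat_E22Row_mulVec_E22KernelVec : circulantMat E22Row *ᵥ E22KernelVec = 0 := by
  rw [E22Row_eq, circulantMat_add, add_mulVec,
    circulantMat_mulVec_eq_zero_of_sum_translate_eq_zero (fun k => if k ∈ {0, 3} then 1 else 0)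
      _ _ E22KernelVec_sum_translate_multiplesOf9,
    circulantMat_mulVec_eq_zero_of_sum_translate_eq_zero (fun k => if k ∈ {1, 2, 4, 5} then 1 else 0)
      _ _ E22KernelVec_sum_translate_multiplesOf15, add_zero]

theorem stmt_7 (a : Fin 45 → ℚ) (ha : ∀ j : Fin 45, a j = if (j : ℕ) ∈ E22 then 1 else 0) :
    (circulantMat a).det = 0 ∧
    (Finset.univ.filter fun j => a j = 1).card = 22 ∧
    (Finset.univ.filter fun j => a j = 0).card = 23 := by
  obtain rfl : a = E22Row := funext ha
  refine ⟨?_, ?_, ?_⟩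
  · rw [← exists_mulVec_eq_zero_iff]
    exact ⟨E22KernelVec, E22KernelVec_ne_zero, circulantMat_E22Row_mulVec_E22KernelVec⟩
  · simp only [E22Row, ite_eq_left_iff, zero_ne_one, imp_false, not_not]
    decide
  · simp only [E22Row, ite_eq_right_iff, one_ne_zero, imp_false]
    decide
end

section
/- Let n ≥ 2 and let p_1 < … < p_m be all the distinct prime factors of n. Then in ℚ[x], the greatest common divisor of the polynomials G(n, n/p_1; x), …, G(n, n/p_m; x) is (up to a nonzero constant factor) the n-th cyclotomic polynomial Φ_n(x). -/
open Polynomial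

/-- The fundamental `r`-recurrent polynomial with respect to `n`:
`G(n,r;x) = 1 + x^r + x^{2r} + ⋯ + x^{n-r} = (x^n - 1)/(x^r - 1)`. -/
noncomputable def Gpoly (R : Type*) [Semiring R] (n r : ℕ) : Polynomial R :=
  ∑ l ∈ Finset.range (n / r), X ^ (l * r)

/-!
Since `X ^ n - 1 = ∏_{d ∣ n} Φ_d`, the polynomial `G(n, r)` is the product of the `Φ_d` with
`d ∣ n` and `d ∤ r`. Every such product for `r = n / p` contains `Φ_n`; conversely, a proper
divisor `d` of `n` divides `n / p` for some prime `p ∣ n`, so `Φ_d` is coprime to `G(n, n / p)`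
and hence to the gcd.
-/

namespace Gpoly

variable {R : Type*} [CommRing R] {n r d : ℕ}

theorem mul_X_pow_sub_one (hr : r ∣ n) :
    Gpoly R n r * (X ^ r - 1) = X ^ n - 1 := by
  simp_rw [Gpoly, mul_comm _ r, pow_mul, geom_sum_mul, ← pow_mul, Nat.mul_div_cancel' hr]

theorem eq_prod_cyclotomic (hr : r ∣ n) (hn : n ≠ 0) :
    Gpoly R n r = ∏ d ∈ n.divisors \ r.divisors, cyclotomic d R := by
  have hr0 : r ≠ 0 := ne_zero_of_dvd_ne_zero hn hr
  have hmonic : (X ^ r - 1 : R[X]).Monic := by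
    simpa using monic_X_pow_sub_C (1 : R) hr0
  refine hmonic.isRegular.right (?_ : _ * _ = _ * _)
  rw [mul_X_pow_sub_one hr, mul_comm,
    X_pow_sub_one_mul_prod_cyclotomic_eq_X_pow_sub_one_of_dvd R hr hn]

theorem cyclotomic_dvd (hr : r ∣ n) (hn : n ≠ 0) (hd : d ∣ n) (hdr : ¬d ∣ r) :
    cyclotomic d R ∣ Gpoly R n r := by
  rw [eq_prod_cyclotomic hr hn]
  exact Finset.dvd_prod_of_mem _ (by simp [hd, hn, hdr])

theorem isCoprime_cyclotomic (hr : r ∣ n) (hn : n ≠ 0) (hdr : d ∣ r) :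
    IsCoprime (cyclotomic d ℚ) (Gpoly ℚ n r) := by
  have hr0 : r ≠ 0 := ne_zero_of_dvd_ne_zero hn hr
  rw [eq_prod_cyclotomic hr hn]
  refine IsCoprime.prod_right fun e he => cyclotomic.isCoprime_rat ?_
  rintro rfl
  exact (Finset.mem_sdiff.mp he).2 (Nat.mem_divisors.mpr ⟨hdr, hr0⟩)

end Gpoly

theorem Nat.exists_prime_dvd_and_dvd_div_of_dvd_of_ne {d n : ℕ} (hd : d ∣ n) (hdn : d ≠ n) :
    ∃ p, p.Prime ∧ p ∣ n ∧ d ∣ n / p := by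
  obtain ⟨k, rfl⟩ := hd
  have hk : k ≠ 1 := by rintro rfl; exact hdn (mul_one d).symm
  obtain ⟨p, hp, hpk⟩ := Nat.exists_prime_and_dvd hk
  exact ⟨p, hp, hpk.mul_left d, by rw [Nat.mul_div_assoc d hpk]; exact dvd_mul_right d _⟩

theorem Nat.not_dvd_div_of_prime_dvd {n p : ℕ} (hp : p.Prime) (hpn : p ∣ n) (hn : n ≠ 0) :
    ¬n ∣ n / p := fun h =>
  have hn0 : 0 < n := Nat.pos_of_ne_zero hn
  (Nat.div_lt_self hn0 hp.one_lt).not_ge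
    (Nat.le_of_dvd (Nat.div_pos (Nat.le_of_dvd hn0 hpn) hp.pos) h)

theorem cyclotomic_dvd_gcd_Gpoly (n : ℕ) :
    cyclotomic n ℚ ∣ n.primeFactors.gcd fun p => Gpoly ℚ n (n / p) := by
  refine Finset.dvd_gcd fun p hp => ?_
  obtain ⟨hp, hpn, hn⟩ := Nat.mem_primeFactors.mp hp
  exact Gpoly.cyclotomic_dvd (Nat.div_dvd_of_dvd hpn) hn dvd_rfl
    (Nat.not_dvd_div_of_prime_dvd hp hpn hn)

theorem gcd_Gpoly_dvd_cyclotomic {n : ℕ} (hn : 1 < n) :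
    (n.primeFactors.gcd fun p => Gpoly ℚ n (n / p)) ∣ cyclotomic n ℚ := by
  set D := n.primeFactors.gcd fun p => Gpoly ℚ n (n / p)
  have hn0 : n ≠ 0 := by omega
  have hD_dvd {p : ℕ} (hp : p.Prime) (hpn : p ∣ n) : D ∣ Gpoly ℚ n (n / p) :=
    Finset.gcd_dvd (Nat.mem_primeFactors.mpr ⟨hp, hpn, hn0⟩)
  obtain ⟨p, hp, hpn⟩ := Nat.exists_prime_and_dvd hn.ne'
  set T := n.divisors \ (n / p).divisors
  have hnT : n ∈ T := by simp [T, hn0, Nat.not_dvd_div_of_prime_dvd hp hpn hn0]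
  have hD : D ∣ (∏ d ∈ T.erase n, cyclotomic d ℚ) * cyclotomic n ℚ := by
    rw [Finset.prod_erase_mul T _ hnT, ← Gpoly.eq_prod_cyclotomic (Nat.div_dvd_of_dvd hpn) hn0]
    exact hD_dvd hp hpn
  refine (IsCoprime.prod_left fun d hd => ?_).symm.dvd_of_dvd_mul_left hD
  have hdn : d ∣ n := (Nat.mem_divisors.mp (Finset.mem_sdiff.mp (Finset.mem_of_mem_erase hd)).1).1
  obtain ⟨q, hq, hqn, hdq⟩ :=
    Nat.exists_prime_dvd_and_dvd_div_of_dvd_of_ne hdn (Finset.ne_of_mem_erase hd)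
  exact (Gpoly.isCoprime_cyclotomic (Nat.div_dvd_of_dvd hqn) hn0 hdq).of_isCoprime_of_dvd_right
    (hD_dvd hq hqn)

theorem stmt_8 (n : ℕ) (hn : 2 ≤ n) :
    Associated
      (Finset.gcd n.primeFactors fun p => Gpoly ℚ n (n / p))
      (cyclotomic n ℚ) :=
  associated_of_dvd_dvd (gcd_Gpoly_dvd_cyclotomic hn) (cyclotomic_dvd_gcd_Gpoly n)
end

section
/- Let n ≥ 2, let f(x) ∈ ℚ[x] with deg f(x) < n, and suppose the n-th cyclotomic polynomial Φ_n(x) divides f(x) in ℚ[x]. Let p_1 < … < p_m be all the distinct prime factors of n. Then there exist polynomials h_{n/p_1}(x), …, h_{n/p_m}(x) ∈ ℚ[x] with deg h_{n/p_j}(x) < n/p_j for each j, such that f(x) = Σ_{j=1}^{m} h_{n/p_j}(x) · G(n, n/p_j; x). -/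
/-!
For a prime `p ∣ n`, `G(n, n/p) · (X^(n/p) - 1) = X^n - 1` is squarefree, so `G(n, n/p)` is
coprime to `X^(n/p) - 1`. Every `Φ_d` with `d` a proper divisor of `n` divides some
`X^(n/p) - 1`, so the ideal generated by the `G(n, n/p)` is coprime to
`(X^n - 1)/Φ_n`; as it also contains `X^n - 1`, it contains `Φ_n`, hence every multiple `f` of
`Φ_n`. Reducing the coefficients of such a combination modulo `X^(n/p) - 1` changes it by a
multiple of `X^n - 1`, which vanishes when `deg f < n`.
-/

open Polynomial

lemma Nat.exists_mem_primeFactors_dvd_div_of_mem_properDivisors {n d : ℕ}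
    (hd : d ∈ n.properDivisors) : ∃ p ∈ n.primeFactors, d ∣ n / p := by
  obtain ⟨⟨k, rfl⟩, hlt⟩ := Nat.mem_properDivisors.1 hd
  have hk : k ≠ 1 := by rintro rfl; simp at hlt
  obtain ⟨p, hp, hpk⟩ := Nat.exists_prime_and_dvd hk
  refine ⟨p, Nat.mem_primeFactors.2 ⟨hp, hpk.mul_left d, by omega⟩, k / p, ?_⟩
  exact Nat.mul_div_assoc d hpk

section Gpoly

variable {R : Type*}

lemma Gpoly_mul_X_pow_sub_one [Ring R] {n r : ℕ} (hr : r ∣ n) :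
    Gpoly R n r * (X ^ r - 1) = X ^ n - 1 := by
  have hgeom : Gpoly R n r = ∑ l ∈ Finset.range (n / r), (X ^ r : R[X]) ^ l :=
    Finset.sum_congr rfl fun l _ => by rw [← pow_mul, mul_comm]
  rw [hgeom, geom_sum_mul, ← pow_mul, Nat.mul_div_cancel' hr]

lemma natDegree_Gpoly_le [Semiring R] (n r : ℕ) : (Gpoly R n r).natDegree ≤ n - r := by
  refine natDegree_sum_le_of_forall_le _ _ fun l hl => (natDegree_X_pow_le _).trans ?_
  have hr : 0 < r := Nat.pos_of_ne_zero fun h => by simp [h] at hl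
  have := (Nat.le_div_iff_mul_le hr).1 (Finset.mem_range.1 hl)
  rw [Nat.succ_mul] at this
  omega

lemma degree_mul_Gpoly_lt [Semiring R] {h : R[X]} {n r : ℕ} (hrn : r ≤ n)
    (hh : h.degree < r) : (h * Gpoly R n r).degree < n := by
  rcases eq_or_ne h 0 with rfl | h0
  · simp
  have hh' : h.natDegree < r := (natDegree_lt_iff_degree_lt h0).2 hh
  refine degree_le_natDegree.trans_lt ?_
  have hmul := natDegree_mul_le (p := h) (q := Gpoly R n r)
  have hG := natDegree_Gpoly_le (R := R) n r
  exact_mod_cast (by omega : (h * Gpoly R n r).natDegree < n)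

end Gpoly

section Field

variable {K : Type*} [Field K]

lemma isCoprime_Gpoly_X_pow_sub_one {n r : ℕ} (hn : (n : K) ≠ 0) (hr : r ∣ n) :
    IsCoprime (Gpoly K n r) (X ^ r - 1) := by
  have hsf := (X_pow_sub_one_separable_iff.2 hn).squarefree
  rw [← Gpoly_mul_X_pow_sub_one hr] at hsf
  exact isRelPrime_iff_isCoprime.1 (squarefree_mul_iff.1 hsf).1

lemma exists_Gpoly_decomposition_of_degree_lt {ι : Type*} (s : Finset ι) {n : ℕ} (hn : 0 < n)
    {r : ι → ℕ} (hr : ∀ i ∈ s, 0 < r i ∧ r i ∣ n) {f : K[X]} (hf : f.degree < n) (b : ι → K[X])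
    (hfb : f = ∑ i ∈ s, b i * Gpoly K n (r i)) :
    ∃ h : ι → K[X], (∀ i ∈ s, (h i).degree < r i) ∧ f = ∑ i ∈ s, h i * Gpoly K n (r i) := by
  have hmonic : ∀ i ∈ s, ((X : K[X]) ^ r i - 1).Monic := fun i hi =>
    leadingCoeff_X_pow_sub_one (hr i hi).1
  have hdegX : ∀ {m : ℕ}, 0 < m → ((X : K[X]) ^ m - 1).degree = m := fun hm => by
    simpa using degree_X_pow_sub_C hm (1 : K)
  have hmod : ∀ i ∈ s, (b i %ₘ (X ^ r i - 1)).degree < r i := fun i hi =>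
    hdegX (hr i hi).1 ▸ degree_modByMonic_lt (b i) (hmonic i hi)
  refine ⟨fun i => b i %ₘ (X ^ r i - 1), hmod, ?_⟩
  have hdiff : f - ∑ i ∈ s, b i %ₘ (X ^ r i - 1) * Gpoly K n (r i)
      = (X ^ n - 1) * ∑ i ∈ s, b i /ₘ (X ^ r i - 1) := by
    rw [hfb, ← Finset.sum_sub_distrib, Finset.mul_sum]
    refine Finset.sum_congr rfl fun i hi => ?_
    rw [← Gpoly_mul_X_pow_sub_one (hr i hi).2]
    linear_combination -Gpoly K n (r i) * modByMonic_add_div (b i) (X ^ r i - 1)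
  have hsum : (∑ i ∈ s, b i %ₘ (X ^ r i - 1) * Gpoly K n (r i)).degree < n :=
    (degree_sum_le _ _).trans_lt <| (Finset.sup_lt_iff (WithBot.bot_lt_coe n)).2 fun i hi =>
      degree_mul_Gpoly_lt (Nat.le_of_dvd hn (hr i hi).2) (hmod i hi)
  refine sub_eq_zero.1 (eq_zero_of_dvd_of_degree_lt (Dvd.intro _ hdiff.symm) ?_)
  exact hdegX hn ▸ (degree_sub_le _ _).trans_lt (max_lt hf hsum)

lemma cyclotomic_mem_span_Gpoly {n : ℕ} (hn1 : 1 < n) (hn : (n : K) ≠ 0) :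
    cyclotomic n K ∈ Ideal.span ((fun p => Gpoly K n (n / p)) '' n.primeFactors) := by
  set I := Ideal.span ((fun p => Gpoly K n (n / p)) '' n.primeFactors)
  have hG : ∀ p ∈ n.primeFactors, Gpoly K n (n / p) ∈ I := fun p hp =>
    Ideal.subset_span ⟨p, hp, rfl⟩
  have hdiv : ∀ p ∈ n.primeFactors, n / p ∣ n := fun p hp =>
    Nat.div_dvd_of_dvd (Nat.dvd_of_mem_primeFactors hp)
  have hcop : ∀ d ∈ n.properDivisors, IsCoprime I (Ideal.span {cyclotomic d K}) := by
    intro d hd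
    obtain ⟨p, hp, hdp⟩ := Nat.exists_mem_primeFactors_dvd_div_of_mem_properDivisors hd
    have hcyc : cyclotomic d K ∣ X ^ (n / p) - 1 := by
      obtain ⟨k, hk⟩ := hdp
      rw [hk, pow_mul]
      exact (cyclotomic.dvd_X_pow_sub_one d K).trans (sub_one_dvd_pow_sub_one _ k)
    obtain ⟨a, b, hab⟩ :=
      (isCoprime_Gpoly_X_pow_sub_one hn (hdiv p hp)).of_isCoprime_of_dvd_right hcyc
    exact Ideal.isCoprime_iff_exists.2 ⟨_, I.mul_mem_left a (hG p hp), _,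
      Ideal.mul_mem_left _ b (Ideal.mem_span_singleton_self _), hab⟩
  have hcop' := IsCoprime.prod_right hcop
  rw [Ideal.prod_span_singleton] at hcop'
  obtain ⟨i, hi, j, hj, hij⟩ := Ideal.isCoprime_iff_exists.1 hcop'
  obtain ⟨c, rfl⟩ := Ideal.mem_span_singleton'.1 hj
  obtain ⟨p, hp⟩ := Nat.nonempty_primeFactors.2 hn1
  have hXn : (X ^ n - 1 : K[X]) ∈ I := by
    rw [← Gpoly_mul_X_pow_sub_one (hdiv p hp)]
    exact I.mul_mem_right _ (hG p hp)
  have hfactor : (X ^ n - 1 : K[X]) = cyclotomic n K * ∏ d ∈ n.properDivisors, cyclotomic d K := by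
    rw [← prod_cyclotomic_eq_X_pow_sub_one (by omega), ← Nat.cons_self_properDivisors (by omega),
      Finset.prod_cons]
  have hcyc : cyclotomic n K = cyclotomic n K * i + c * (X ^ n - 1) := by
    rw [hfactor]
    linear_combination -(cyclotomic n K) * hij
  rw [hcyc]
  exact I.add_mem (I.mul_mem_left _ hi) (I.mul_mem_left _ hXn)

end Field

theorem stmt_9 (n : ℕ) (hn : 2 ≤ n) (f : Polynomial ℚ)
    (hdeg : f.degree < (n : WithBot ℕ)) (hdvd : cyclotomic n ℚ ∣ f) :
    ∃ h : ℕ → Polynomial ℚ,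
      (∀ p ∈ n.primeFactors, (h p).degree < ((n / p : ℕ) : WithBot ℕ)) ∧
      f = ∑ p ∈ n.primeFactors, h p * Gpoly ℚ n (n / p) := by
  obtain ⟨w, rfl⟩ := hdvd
  obtain ⟨a, ha⟩ := (Submodule.mem_span_image_finset_iff_exists_fun' _).1
    (cyclotomic_mem_span_Gpoly (K := ℚ) hn (by norm_cast; omega))
  have hr : ∀ p ∈ n.primeFactors, 0 < n / p ∧ n / p ∣ n := fun p hp =>
    have hpn := Nat.dvd_of_mem_primeFactors hp
    ⟨Nat.div_pos (Nat.le_of_dvd (by omega) hpn) (Nat.pos_of_mem_primeFactors hp),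
      Nat.div_dvd_of_dvd hpn⟩
  refine exists_Gpoly_decomposition_of_degree_lt _ (by omega) hr hdeg (fun p => w * a p) ?_
  rw [← ha, Finset.sum_mul]
  exact Finset.sum_congr rfl fun p _ => by rw [smul_eq_mul]; ring
end

section
/- Let p < q be two distinct primes, let n = p^{e_1}·q^{e_2} with e_1, e_2 ≥ 1, let d ≥ 1, and let f(x) ∈ ℤ[x] be a polynomial all of whose coefficients lie in {0,1,…,d}, with deg f(x) < n, such that Φ_n(x) divides f(x). Then there exist polynomials h_{n/p}(x), h_{n/q}(x) ∈ ℤ[x], all of whose coefficients lie in {0,1,…,d}, with deg h_{n/p}(x) < n/p and deg h_{n/q}(x) < n/q, such that f(x) = h_{n/p}(x)·G(n, n/p; x) + h_{n/q}(x)·G(n, n/q; x). In particular, when d = 1 a unital such decomposition exists. -/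
/-!
Write `n = m p q`. Then `Φ_n(x) = Φ_{pq}(x^m)`, and `G(n, n/p) = Φ_n(x) Φ_p(x^m)`,
`G(n, n/q) = Φ_n(x) Φ_q(x^m)`. Since `Φ_p` and `Φ_q` are coprime in `ℤ[x]` and `Φ_p(x^m)` is
monic, division with remainder writes `f / Φ_n = A Φ_p(x^m) + B Φ_q(x^m)` with `deg A < n/p` and
`deg B < n/q`, i.e. `f = A G(n, n/p) + B G(n, n/q)`. The coefficient of `x^i` in `f` is then
`a_{i mod n/p} + b_{i mod n/q}`, and by the Chinese remainder theorem every pair `(u, v)` with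
`u ≡ v (mod m)` occurs, so all such sums `a_u + b_v` lie in `[0, d]`. Subtracting from `a` its
minimum on each residue class mod `m` and adding it to `b` preserves the decomposition (an
`m`-periodic shift contributes equally to both terms) and puts every coefficient in `[0, d]`.
-/

open Polynomial

open Finset

section CommRing

variable {R : Type*} [CommRing R]

theorem X_pow_gcd_sub_one_mem_span (a b : ℕ) :
    (X : R[X]) ^ a.gcd b - 1 ∈ Ideal.span {X ^ a - 1, X ^ b - 1} := by
  induction a, b using Nat.gcd.induction with
  | H0 b => simp
  | H1 a b _ ih =>
    rw [Nat.gcd_rec]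
    refine Ideal.span_le.2 (Set.pair_subset ?_ ?_) ih
    · obtain ⟨w, hw⟩ : (X : R[X]) ^ a - 1 ∣ X ^ (a * (b / a)) - 1 := by
        simpa [pow_mul] using sub_dvd_pow_sub_pow (X ^ a : R[X]) 1 (b / a)
      have hb : (X : R[X]) ^ (b % a) - 1 =
          (X ^ b - 1) - X ^ (b % a) * (X ^ (a * (b / a)) - 1) := by
        rw [mul_sub, ← pow_add, Nat.mod_add_div]; ring
      rw [SetLike.mem_coe, hb, hw, Ideal.mem_span_pair]
      exact ⟨-(X ^ (b % a) * w), 1, by ring⟩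
    · exact Ideal.subset_span (Set.mem_insert _ _)

theorem isCoprime_geom_sum_X {a b : ℕ} (h : a.Coprime b) :
    IsCoprime (∑ i ∈ range a, (X : R[X]) ^ i) (∑ i ∈ range b, (X : R[X]) ^ i) := by
  obtain ⟨u, v, huv⟩ := Ideal.mem_span_pair.1 (X_pow_gcd_sub_one_mem_span (R := R) a b)
  rw [h.gcd_eq_one, pow_one, ← geom_sum_mul, ← geom_sum_mul] at huv
  refine ⟨u, v, ?_⟩
  have hX : (X - C 1 : R[X]).Monic := monic_X_sub_C 1
  rw [← sub_eq_zero, ← hX.mul_left_eq_zero_iff, C_1]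
  linear_combination huv

theorem cyclotomic_mul_prime_pow_eq_expand {p k : ℕ} (hp : p.Prime) (hk : p ∣ k) (a : ℕ) :
    cyclotomic (k * p ^ a) R = expand R (p ^ a) (cyclotomic k R) := by
  induction a with
  | zero => simp
  | succ a ih =>
    rw [pow_succ, ← mul_assoc, ← cyclotomic_expand_eq_cyclotomic hp (hk.mul_right _), ih,
      expand_expand, mul_comm]

theorem cyclotomic_prime_pow_succ_mul_prime_pow_succ {p q : ℕ} (hp : p.Prime) (hq : q.Prime)
    (a b : ℕ) :
    cyclotomic (p ^ (a + 1) * q ^ (b + 1)) R = expand R (p ^ a * q ^ b) (cyclotomic (p * q) R) := by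
  rw [show p ^ (a + 1) * q ^ (b + 1) = p * q * p ^ a * q ^ b by ring,
    cyclotomic_mul_prime_pow_eq_expand hq ((dvd_mul_left q p).mul_right _),
    cyclotomic_mul_prime_pow_eq_expand hp (dvd_mul_right p q), expand_expand, mul_comm]

theorem exists_eq_mul_add_mul_degree_lt_of_isCoprime [Nontrivial R] {P Q g : R[X]}
    (hPQ : IsCoprime P Q) (hP : P.Monic) {N : ℕ} (hQ : Q.degree ≤ N)
    (hg : g.degree < N + P.natDegree) :
    ∃ A B : R[X], g = A * P + B * Q ∧ A.degree < N ∧ B.degree < P.natDegree := by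
  obtain ⟨u, v, huv⟩ := hPQ
  set B := g * v %ₘ P
  set A := g * u + Q * (g * v /ₘ P)
  have hgAB : g = A * P + B * Q := by
    linear_combination (-g) * huv - Q * modByMonic_add_div (g * v) P
  have hPdeg : P.degree = P.natDegree := degree_eq_natDegree hP.ne_zero
  have hB : B.degree < P.natDegree := hPdeg ▸ degree_modByMonic_lt _ hP
  have hBQ : (B * Q).degree < N + P.natDegree := calc
    (B * Q).degree ≤ B.degree + N := (degree_mul_le _ _).trans (by gcongr)
    _ < P.natDegree + N := WithBot.add_lt_add_right (WithBot.natCast_ne_bot _) hB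
    _ = N + P.natDegree := add_comm _ _
  have hAP : (A * P).degree < N + P.natDegree := by
    rw [eq_sub_of_add_eq hgAB.symm]
    exact (degree_sub_le _ _).trans_lt (max_lt hg hBQ)
  rw [hP.degree_mul, hPdeg] at hAP
  exact ⟨A, B, hgAB, lt_of_add_lt_add_right hAP, hB⟩

end CommRing

section Semiring

variable {R : Type*} [Semiring R]

theorem coeff_mul_X_pow_mul_of_degree_lt {A : R[X]} {r : ℕ} (hr : 0 < r) (hA : A.degree < r)
    (l i : ℕ) : (A * X ^ (l * r)).coeff i = if l = i / r then A.coeff (i % r) else 0 := by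
  rw [coeff_mul_X_pow']
  split_ifs with hle hl hl
  · rw [hl, Nat.mod_eq_sub_mul_div, mul_comm]
  · refine coeff_eq_zero_of_degree_lt (hA.trans_le ?_)
    have hlt : l + 1 ≤ i / r := by
      have := (Nat.le_div_iff_mul_le hr).2 hle
      omega
    have := (Nat.le_div_iff_mul_le hr).1 hlt
    rw [add_mul, one_mul] at this
    exact_mod_cast (show r ≤ i - l * r by omega)
  · exact absurd (hl ▸ Nat.div_mul_le_self i r) hle
  · rfl

theorem coeff_mul_Gpoly {A : R[X]} {n r : ℕ} (hA : A.degree < r) (hr : r ∣ n) (i : ℕ) :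
    (A * Gpoly R n r).coeff i = if i < n then A.coeff (i % r) else 0 := by
  rcases Nat.eq_zero_or_pos r with rfl | hr0
  · simp [show A = 0 by simpa [Nat.WithBot.lt_zero_iff] using hA]
  obtain ⟨c, rfl⟩ := hr
  simp only [Gpoly, mul_sum, finsetSum_coeff, coeff_mul_X_pow_mul_of_degree_lt hr0 hA,
    sum_ite_eq', mem_range, Nat.mul_div_cancel_left c hr0, Nat.div_lt_iff_lt_mul hr0, mul_comm c]

theorem coeff_add_coeff_mem_of_eq_mul_Gpoly_add_mul_Gpoly [LE R] {n r s : ℕ} {f A B : R[X]}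
    {d : R} (hn : n ≠ 0) (hr : r ∣ n) (hs : s ∣ n)
    (hf : ∀ i, 0 ≤ f.coeff i ∧ f.coeff i ≤ d) (hA : A.degree < r) (hB : B.degree < s)
    (hfAB : f = A * Gpoly R n r + B * Gpoly R n s) {u v : ℕ} (hu : u < r) (hv : v < s)
    (huv : u % r.gcd s = v % r.gcd s) :
    0 ≤ A.coeff u + B.coeff v ∧ A.coeff u + B.coeff v ≤ d := by
  have hin := (Nat.chineseRemainder'_lt_lcm huv (by omega) (by omega)).trans_le
    (Nat.le_of_dvd (Nat.pos_of_ne_zero hn) (Nat.lcm_dvd hr hs))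
  obtain ⟨hiu, hiv⟩ := (Nat.chineseRemainder' huv).2
  have hfi := hf (Nat.chineseRemainder' huv)
  rwa [hfAB, coeff_add, coeff_mul_Gpoly hA hr, coeff_mul_Gpoly hB hs, if_pos hin, if_pos hin,
    hiu, hiv, Nat.mod_eq_of_lt hu, Nat.mod_eq_of_lt hv] at hfi

end Semiring

theorem Gpoly_mul_eq_expand (R : Type*) [CommSemiring R] {k : ℕ} (hk : 0 < k) (c : ℕ) :
    Gpoly R (k * c) k = expand R k (∑ i ∈ range c, X ^ i) := by
  simp only [Gpoly, Nat.mul_div_cancel_left c hk, map_sum, map_pow, expand_X, ← pow_mul,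
    mul_comm]

theorem exists_lt_mod_eq_forall_le {α : Type*} [LinearOrder α] (a : ℕ → α) {g r : ℕ}
    (hg : 0 < g) (hgr : g ≤ r) (c : ℕ) :
    ∃ u < r, u % g = c % g ∧ ∀ w < r, w % g = c % g → a u ≤ a w := by
  obtain ⟨u, hu, hmin⟩ := ((range r).filter (· % g = c % g)).exists_min_image a
    ⟨c % g, by simp [(Nat.mod_lt c hg).trans_le hgr]⟩
  simp only [mem_filter, mem_range] at hu hmin
  exact ⟨u, hu.1, hu.2, fun w hw hwc => hmin w ⟨hw, hwc⟩⟩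

section Ordered

variable {R : Type*} [CommRing R] [LinearOrder R] [IsStrictOrderedRing R]
  {n r s : ℕ} {f A B : R[X]} {d : R}

theorem exists_coeff_bounded_eq_mul_Gpoly_add_mul_Gpoly (hn : n ≠ 0) (hr : r ∣ n)
    (hs : s ∣ n) (hf : ∀ i, 0 ≤ f.coeff i ∧ f.coeff i ≤ d) (hA : A.degree < r)
    (hB : B.degree < s) (hfAB : f = A * Gpoly R n r + B * Gpoly R n s) :
    ∃ A' B' : R[X], (∀ i, 0 ≤ A'.coeff i ∧ A'.coeff i ≤ d) ∧
      (∀ i, 0 ≤ B'.coeff i ∧ B'.coeff i ≤ d) ∧ A'.degree < r ∧ B'.degree < s ∧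
      f = A' * Gpoly R n r + B' * Gpoly R n s := by
  have hr0 : 0 < r := Nat.pos_of_ne_zero (ne_zero_of_dvd_ne_zero hn hr)
  set g := r.gcd s
  have compat {u v : ℕ} (hu : u < r) (hv : v < s) (huv : u % g = v % g) :=
    coeff_add_coeff_mem_of_eq_mul_Gpoly_add_mul_Gpoly hn hr hs hf hA hB hfAB hu hv huv
  have hg0 : 0 < g := Nat.gcd_pos_of_pos_left s hr0
  have hgs_le : g ≤ s := Nat.gcd_le_right _ (Nat.pos_of_ne_zero (ne_zero_of_dvd_ne_zero hn hs))
  have hgr : g ∣ r := Nat.gcd_dvd_left r s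
  have hgs : g ∣ s := Nat.gcd_dvd_right r s
  choose u₀ hu₀r hu₀g hu₀min using
    exists_lt_mod_eq_forall_le A.coeff hg0 (Nat.gcd_le_left s hr0)
  set t : PowerSeries R := PowerSeries.mk fun c => A.coeff (u₀ (c % g))
  have hshift : PowerSeries.trunc r t * Gpoly R n r = PowerSeries.trunc s t * Gpoly R n s := by
    ext i
    simp only [coeff_mul_Gpoly (PowerSeries.degree_trunc_lt _ _) hr,
      coeff_mul_Gpoly (PowerSeries.degree_trunc_lt _ _) hs, PowerSeries.coeff_trunc, t,
      PowerSeries.coeff_mk, Nat.mod_lt i hr0, Nat.mod_lt i (hg0.trans_le hgs_le), if_true,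
      Nat.mod_mod_of_dvd i hgr, Nat.mod_mod_of_dvd i hgs]
  have hd : 0 ≤ d := (hf 0).1.trans (hf 0).2
  refine ⟨A - PowerSeries.trunc r t, B + PowerSeries.trunc s t, fun u => ?_, fun v => ?_,
    ?_, ?_, by rw [sub_mul, add_mul, hshift, hfAB]; ring⟩
  · rw [coeff_sub, PowerSeries.coeff_trunc, PowerSeries.coeff_mk]
    split_ifs with hu
    · have h₁ := compat hu ((Nat.mod_lt u hg0).trans_le hgs_le) (Nat.mod_mod u g).symm
      have h₂ := compat (hu₀r (u % g)) ((Nat.mod_lt u hg0).trans_le hgs_le) (hu₀g _)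
      have h₃ := hu₀min (u % g) u hu (Nat.mod_mod u g).symm
      constructor <;> linarith
    · simp [coeff_eq_zero_of_degree_lt (hA.trans_le (by exact_mod_cast not_lt.1 hu)), hd]
  · rw [coeff_add, PowerSeries.coeff_trunc, PowerSeries.coeff_mk]
    split_ifs with hv
    · rw [add_comm]
      exact compat (hu₀r (v % g)) hv (by rw [hu₀g, Nat.mod_mod])
    · simp [coeff_eq_zero_of_degree_lt (hB.trans_le (by exact_mod_cast not_lt.1 hv)), hd]
  · exact (degree_sub_le _ _).trans_lt (max_lt hA (PowerSeries.degree_trunc_lt _ _))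
  · exact (degree_add_le _ _).trans_lt (max_lt hB (PowerSeries.degree_trunc_lt _ _))

end Ordered

section Cyclotomic

variable {R : Type*} [CommRing R] {p q m : ℕ}

theorem Gpoly_eq_expand_cyclotomic_mul (hp : p.Prime) (hq : q.Prime) (hpq : p ≠ q)
    (hm : 0 < m) :
    Gpoly R (m * q * p) (m * q) =
      expand R m (cyclotomic (p * q) R) * expand R m (cyclotomic p R) := by
  have hqp : ¬q ∣ p := fun h => hpq ((Nat.prime_dvd_prime_iff_eq hq hp).1 h).symm
  have := Fact.mk hp
  rw [Gpoly_mul_eq_expand R (Nat.mul_pos hm hq.pos), ← cyclotomic_prime, expand_mul,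
    cyclotomic_expand_eq_cyclotomic_mul hq hqp, map_mul]

theorem exists_eq_mul_Gpoly_add_mul_Gpoly [Nontrivial R] (hp : p.Prime) (hq : q.Prime)
    (hpq : p ≠ q) (hm : 0 < m) {f : R[X]} (hdvd : expand R m (cyclotomic (p * q) R) ∣ f)
    (hdeg : f.degree < (m * p * q : ℕ)) :
    ∃ A B : R[X], A.degree < (m * q : ℕ) ∧ B.degree < (m * p : ℕ) ∧
      f = A * Gpoly R (m * p * q) (m * q) + B * Gpoly R (m * p * q) (m * p) := by
  obtain ⟨g, rfl⟩ := hdvd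
  have hGp := Gpoly_eq_expand_cyclotomic_mul (R := R) hp hq hpq hm
  have hGq := Gpoly_eq_expand_cyclotomic_mul (R := R) hq hp hpq.symm hm
  rw [mul_right_comm] at hGp
  rw [mul_comm q p] at hGq
  have hcop : IsCoprime (expand R m (cyclotomic p R)) (expand R m (cyclotomic q R)) := by
    have := Fact.mk hp
    have := Fact.mk hq
    rw [cyclotomic_prime, cyclotomic_prime]
    exact (isCoprime_geom_sum_X ((Nat.coprime_primes hp hq).2 hpq)).map _
  have hmonic {k : ℕ} : (expand R m (cyclotomic k R)).Monic :=
    (monic_expand_iff hm).2 (cyclotomic.monic k R)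
  have hdegQ : (expand R m (cyclotomic q R)).degree ≤ (m * q : ℕ) := by
    rw [degree_eq_natDegree hmonic.ne_zero, natDegree_expand, natDegree_cyclotomic,
      Nat.totient_prime hq, mul_comm]
    exact_mod_cast Nat.mul_le_mul_left m (Nat.sub_le q 1)
  have hdegg : g.degree < (m * q : ℕ) + (expand R m (cyclotomic p R)).natDegree := by
    rw [mul_comm, hmonic.degree_mul, degree_eq_natDegree (hmonic (k := p * q)).ne_zero] at hdeg
    simp only [natDegree_expand, natDegree_cyclotomic, Nat.totient_mul
      ((Nat.coprime_primes hp hq).2 hpq), Nat.totient_prime hp, Nat.totient_prime hq] at hdeg ⊢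
    refine lt_of_add_lt_add_right (hdeg.trans_eq ?_)
    norm_cast
    zify [hp.one_le, hq.one_le]
    ring
  obtain ⟨A, B, hAB, hA, hB⟩ :=
    exists_eq_mul_add_mul_degree_lt_of_isCoprime hcop hmonic hdegQ hdegg
  refine ⟨A, B, hA, hB.trans_le ?_, ?_⟩
  · rw [natDegree_expand, natDegree_cyclotomic, Nat.totient_prime hp, mul_comm]
    exact_mod_cast Nat.mul_le_mul_left m (Nat.sub_le p 1)
  · rw [hGp, hGq, hAB]
    ring

end Cyclotomic

theorem stmt_10_general (p q e₁ e₂ n : ℕ) (hp : p.Prime) (hq : q.Prime) (hpq : p < q)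
    (he₁ : 1 ≤ e₁) (he₂ : 1 ≤ e₂) (hn : n = p ^ e₁ * q ^ e₂)
    (d : ℕ) (f : Polynomial ℤ)
    (hcoeff : ∀ i : ℕ, 0 ≤ f.coeff i ∧ f.coeff i ≤ (d : ℤ))
    (hdeg : f.degree < (n : WithBot ℕ)) (hdvd : cyclotomic n ℤ ∣ f) :
    ∃ hnp hnq : Polynomial ℤ,
      (∀ i : ℕ, 0 ≤ hnp.coeff i ∧ hnp.coeff i ≤ (d : ℤ)) ∧
      (∀ i : ℕ, 0 ≤ hnq.coeff i ∧ hnq.coeff i ≤ (d : ℤ)) ∧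
      hnp.degree < ((n / p : ℕ) : WithBot ℕ) ∧
      hnq.degree < ((n / q : ℕ) : WithBot ℕ) ∧
      f = hnp * Gpoly ℤ n (n / p) + hnq * Gpoly ℤ n (n / q) := by
  obtain ⟨a, rfl⟩ := Nat.exists_eq_add_of_le' he₁
  obtain ⟨b, rfl⟩ := Nat.exists_eq_add_of_le' he₂
  rw [hn, cyclotomic_prime_pow_succ_mul_prime_pow_succ hp hq] at hdvd
  set m := p ^ a * q ^ b
  have hm : 0 < m := Nat.mul_pos (pow_pos hp.pos a) (pow_pos hq.pos b)
  have hnm : n = m * p * q := by rw [hn]; ring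
  subst hnm
  obtain ⟨A, B, hA, hB, hfAB⟩ := exists_eq_mul_Gpoly_add_mul_Gpoly hp hq hpq.ne hm hdvd hdeg
  have hnp : m * p * q / p = m * q := by rw [mul_right_comm, Nat.mul_div_cancel _ hp.pos]
  have hnq : m * p * q / q = m * p := Nat.mul_div_cancel _ hq.pos
  rw [hnp, hnq]
  have hn0 : m * p * q ≠ 0 := (Nat.mul_pos (Nat.mul_pos hm hp.pos) hq.pos).ne'
  exact exists_coeff_bounded_eq_mul_Gpoly_add_mul_Gpoly hn0 ⟨p, by ring⟩ (dvd_mul_right _ q)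
    hcoeff hA hB hfAB

theorem stmt_10 (p q e₁ e₂ n : ℕ) (hp : p.Prime) (hq : q.Prime) (hpq : p < q)
    (he₁ : 1 ≤ e₁) (he₂ : 1 ≤ e₂) (hn : n = p ^ e₁ * q ^ e₂)
    (d : ℕ) (hd : 1 ≤ d) (f : Polynomial ℤ)
    (hcoeff : ∀ i : ℕ, 0 ≤ f.coeff i ∧ f.coeff i ≤ (d : ℤ))
    (hdeg : f.degree < (n : WithBot ℕ)) (hdvd : cyclotomic n ℤ ∣ f) :
    ∃ hnp hnq : Polynomial ℤ,
      (∀ i : ℕ, 0 ≤ hnp.coeff i ∧ hnp.coeff i ≤ (d : ℤ)) ∧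
      (∀ i : ℕ, 0 ≤ hnq.coeff i ∧ hnq.coeff i ≤ (d : ℤ)) ∧
      hnp.degree < ((n / p : ℕ) : WithBot ℕ) ∧
      hnq.degree < ((n / q : ℕ) : WithBot ℕ) ∧
      f = hnp * Gpoly ℤ n (n / p) + hnq * Gpoly ℤ n (n / q) :=
  stmt_10_general p q e₁ e₂ n hp hq hpq he₁ he₂ hn d f hcoeff hdeg hdvd
end

section
/- Let p < q be two distinct primes and let n = p^{e_1}·q^{e_2} with e_1, e_2 ≥ 1. Let f(x) ∈ ℚ[x] with deg f(x) < n be divisible by Φ_n(x). Then there exists exactly one pair (h_{n/p}(x), h_{n/q}(x)) of polynomials in ℚ[x] with deg h_{n/p} < n/p and deg h_{n/q} < n/q such that f(x) = h_{n/p}(x)·G(n,n/p;x) + h_{n/q}(x)·G(n,n/q;x) and the decomposition is p-uniformized. -/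
/-!
Write `m = n/(pq)`, `G_p = G(n, n/p)`, `G_q = G(n, n/q)`, `P = G(n/p, m)` and `Q = G(n/q, m)`,
so that `P G_p = Q G_q = G(n, m)`. Since `G(n, r) = ∏_{d ∣ n, d ∤ r} Φ_d`, and a divisor of `n`
dividing neither `n/p` nor `n/q` is `n` itself, Bézout gives `f = x G_p + y G_q`; reducing `x`
modulo `x^{n/p} - 1` yields the degree bounds. As `P` and `Q` are coprime, two decompositions
differ by `(c P, -c Q)` with `deg c < m`, and adding `c P` to `h_{n/p}` adds `c_s` to every entry
of the block `B_s`. So `c_s = -min B_s` uniformizes, and no other shift keeps all minima zero.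
-/

open Polynomial

/-- A decomposition with first multiplicator `h` (of degree `< n/p`) is `p`-uniformized if,
writing `h = Σ b_u x^u` and grouping `B_s = {b_{l·n/(pq)+s} : l = 0,…,q-1}` for each
`s = 0,…,n/(pq)-1`, we have `min B_s = 0`, i.e. `0` belongs to `B_s` and bounds it below. -/
def PUniformized (n p q : ℕ) (h : Polynomial ℚ) : Prop :=
  ∀ s < n / (p * q),
    (∃ l < q, h.coeff (l * (n / (p * q)) + s) = 0) ∧
    (∀ l < q, 0 ≤ h.coeff (l * (n / (p * q)) + s))

section Gpoly

variable {R : Type*}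

theorem X_pow_sub_one_mul_gpoly [CommRing R] {n r : ℕ} (h : r ∣ n) :
    ((X : R[X]) ^ r - 1) * Gpoly R n r = X ^ n - 1 := by
  obtain ⟨k, rfl⟩ := h
  rcases r.eq_zero_or_pos with rfl | hr
  · simp [Gpoly]
  simp_rw [Gpoly, Nat.mul_div_cancel_left k hr, mul_comm _ r, pow_mul, mul_geom_sum]

theorem coeff_mul_gpoly_mul_add [Semiring R] {c : R[X]} {k m l s : ℕ} (hc : c.degree < m)
    (hl : l < k) (hs : s < m) : (c * Gpoly R (k * m) m).coeff (l * m + s) = c.coeff s := by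
  rw [Gpoly, Nat.mul_div_cancel k (by omega), Finset.mul_sum, finsetSum_coeff,
    Finset.sum_eq_single l, add_comm, coeff_mul_X_pow]
  · intro l' _ hl'
    rw [coeff_mul_X_pow']
    split_ifs with hle
    · have hlt : l' < l := by
        refine lt_of_le_of_ne (Nat.lt_succ_iff.mp (Nat.lt_of_mul_lt_mul_right (a := m) ?_)) hl'
        rw [Nat.succ_mul]; omega
      have hm : (l' + 1) * m ≤ l * m := Nat.mul_le_mul_right m hlt
      rw [add_mul] at hm
      exact coeff_eq_zero_of_degree_lt (hc.trans_le (by exact_mod_cast (by omega)))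
    · rfl
  · simp [hl]

section Domain

variable [CommRing R] [IsDomain R]

theorem gpoly_ne_zero {n r : ℕ} (hn : n ≠ 0) (h : r ∣ n) : Gpoly R n r ≠ 0 := by
  intro h0
  have := X_pow_sub_one_mul_gpoly (R := R) h
  rw [h0, mul_zero] at this
  exact X_pow_sub_C_ne_zero (Nat.pos_of_ne_zero hn) (1 : R) (by simpa using this.symm)

theorem gpoly_mul_gpoly {n r s : ℕ} (hn : n ≠ 0) (hrs : r ∣ s) (hsn : s ∣ n) :
    Gpoly R s r * Gpoly R n s = Gpoly R n r := by
  have hr : 0 < r := Nat.pos_of_ne_zero (ne_zero_of_dvd_ne_zero hn (hrs.trans hsn))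
  refine mul_left_cancel₀ (by simpa using X_pow_sub_C_ne_zero hr (1 : R)) ?_
  rw [← mul_assoc, X_pow_sub_one_mul_gpoly hrs, X_pow_sub_one_mul_gpoly hsn,
    X_pow_sub_one_mul_gpoly (hrs.trans hsn)]

theorem degree_mul_gpoly_lt_iff {n r : ℕ} (hn : n ≠ 0) (h : r ∣ n) {c : R[X]} :
    (c * Gpoly R n r).degree < n ↔ c.degree < r := by
  have hr : 0 < r := Nat.pos_of_ne_zero (ne_zero_of_dvd_ne_zero hn h)
  have hdeg := congrArg degree (X_pow_sub_one_mul_gpoly (R := R) h)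
  simp only [degree_mul] at hdeg
  rw [← C_1, degree_X_pow_sub_C hr, degree_X_pow_sub_C (Nat.pos_of_ne_zero hn)] at hdeg
  rw [degree_mul, ← hdeg, WithBot.add_lt_add_iff_right (degree_ne_bot.mpr (gpoly_ne_zero hn h))]

theorem gpoly_eq_prod_cyclotomic {n r : ℕ} (hn : n ≠ 0) (h : r ∣ n) :
    Gpoly R n r = ∏ d ∈ n.divisors \ r.divisors, cyclotomic d R := by
  have hr : 0 < r := Nat.pos_of_ne_zero (ne_zero_of_dvd_ne_zero hn h)
  refine mul_left_cancel₀ (by simpa using X_pow_sub_C_ne_zero hr (1 : R)) ?_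
  rw [X_pow_sub_one_mul_gpoly h, ← prod_cyclotomic_eq_X_pow_sub_one hr,
    ← prod_cyclotomic_eq_X_pow_sub_one (Nat.pos_of_ne_zero hn), mul_comm,
    Finset.prod_sdiff (Nat.divisors_subset_of_dvd hn h)]

theorem exists_degree_lt_of_eq_mul_gpoly_add {n r₁ r₂ : ℕ} (hn : n ≠ 0) (h₁ : r₁ ∣ n)
    (h₂ : r₂ ∣ n) {f x y : R[X]} (hf : f = x * Gpoly R n r₁ + y * Gpoly R n r₂)
    (hdeg : f.degree < n) :
    ∃ a b : R[X], a.degree < r₁ ∧ b.degree < r₂ ∧ f = a * Gpoly R n r₁ + b * Gpoly R n r₂ := by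
  have hr₁ : 0 < r₁ := Nat.pos_of_ne_zero (ne_zero_of_dvd_ne_zero hn h₁)
  set M : R[X] := X ^ r₁ - 1
  have hM : M.Monic := by simpa using monic_X_pow_sub_C (1 : R) hr₁.ne'
  have hxM := modByMonic_add_div x M
  set a := x %ₘ M
  have ha : a.degree < r₁ := by
    have hMdeg : M.degree = r₁ := by simpa using degree_X_pow_sub_C hr₁ (1 : R)
    exact hMdeg ▸ degree_modByMonic_lt x hM
  have hfab : f = a * Gpoly R n r₁ + (y + x /ₘ M * (X ^ r₂ - 1)) * Gpoly R n r₂ := by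
    linear_combination hf - Gpoly R n r₁ * hxM + (x /ₘ M) * X_pow_sub_one_mul_gpoly (R := R) h₁
      - (x /ₘ M) * X_pow_sub_one_mul_gpoly (R := R) h₂
  refine ⟨a, _, ha, (degree_mul_gpoly_lt_iff hn h₂).mp ?_, hfab⟩
  rw [eq_sub_of_add_eq' hfab.symm]
  exact (degree_sub_le _ _).trans_lt (max_lt hdeg ((degree_mul_gpoly_lt_iff hn h₁).mpr ha))

end Domain

end Gpoly

theorem isCoprime_prod_cyclotomic {s t : Finset ℕ} (h : Disjoint s t) :
    IsCoprime (∏ d ∈ s, cyclotomic d ℚ) (∏ d ∈ t, cyclotomic d ℚ) :=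
  IsCoprime.prod_left fun _ hd => IsCoprime.prod_right fun _ he =>
    cyclotomic.isCoprime_rat fun hde => Finset.disjoint_left.mp h hd (hde ▸ he)

theorem exists_mul_add_mul_eq_prod_cyclotomic_inter (s t : Finset ℕ) :
    ∃ u v : ℚ[X], u * ∏ d ∈ s, cyclotomic d ℚ + v * ∏ d ∈ t, cyclotomic d ℚ =
      ∏ d ∈ s ∩ t, cyclotomic d ℚ := by
  obtain ⟨u, v, huv⟩ := isCoprime_prod_cyclotomic (disjoint_sdiff_sdiff (x := s) (y := t))
  refine ⟨u, v, ?_⟩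
  rw [← Finset.prod_inter_mul_prod_sdiff s t, ← Finset.prod_inter_mul_prod_sdiff t s,
    Finset.inter_comm t s]
  linear_combination (∏ d ∈ s ∩ t, cyclotomic d ℚ) * huv

theorem exists_prime_mul_dvd_of_dvd_of_ne {d n : ℕ} (hd : d ∣ n) (hne : d ≠ n) :
    ∃ r, r.Prime ∧ d * r ∣ n := by
  obtain ⟨k, rfl⟩ := hd
  obtain ⟨r, hr, hrk⟩ := Nat.exists_prime_and_dvd (fun hk : k = 1 => hne (by rw [hk, mul_one]))
  exact ⟨r, hr, mul_dvd_mul_left d hrk⟩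

theorem sdiff_divisors_inter_sdiff_divisors {p q m : ℕ} (hp : p.Prime) (hq : q.Prime)
    (hm : 0 < m) (hpf : ∀ r, r.Prime → r ∣ p * q * m → r = p ∨ r = q) :
    ((p * q * m).divisors \ (q * m).divisors) ∩ ((p * q * m).divisors \ (p * m).divisors) =
      {p * q * m} := by
  have hn : p * q * m ≠ 0 := by positivity [hp.pos, hq.pos]
  ext d
  simp only [Finset.mem_inter, Finset.mem_sdiff, Nat.mem_divisors, Finset.mem_singleton]
  constructor
  · rintro ⟨⟨⟨hd, -⟩, hdp⟩, -, hdq⟩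
    by_contra hne
    obtain ⟨r, hr, hdr⟩ := exists_prime_mul_dvd_of_dvd_of_ne hd hne
    rcases hpf r hr (dvd_of_mul_left_dvd hdr) with rfl | rfl
    · refine hdp ⟨Nat.dvd_of_mul_dvd_mul_left hr.pos ?_, by positivity [hq.pos]⟩
      rw [mul_comm r]; convert hdr using 1; ring
    · refine hdq ⟨Nat.dvd_of_mul_dvd_mul_left hr.pos ?_, by positivity [hp.pos]⟩
      rw [mul_comm r]; convert hdr using 1; ring
  · rintro rfl
    refine ⟨⟨⟨dvd_rfl, hn⟩, fun h => hp.not_dvd_one ?_⟩, ⟨dvd_rfl, hn⟩, fun h => hq.not_dvd_one ?_⟩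
    · refine Nat.dvd_of_mul_dvd_mul_right (by positivity [hq.pos]) (k := q * m) ?_
      rw [one_mul]; convert h.1 using 1; ring
    · refine Nat.dvd_of_mul_dvd_mul_right (by positivity [hp.pos]) (k := p * m) ?_
      rw [one_mul]; convert h.1 using 1; ring

section Uniformization

variable {n p q m : ℕ}

theorem exists_pUniformized_add_mul_gpoly (hm : n / (p * q) = m) (hq : 0 < q) (a : ℚ[X]) :
    ∃ c : ℚ[X], c.degree < m ∧ PUniformized n p q (a + c * Gpoly ℚ (q * m) m) := by
  have hne : (Finset.range q).Nonempty := Finset.nonempty_range_iff.mpr hq.ne'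
  let μ : ℕ → ℚ := fun s => (Finset.range q).inf' hne fun l => a.coeff (l * m + s)
  let c : ℚ[X] := ∑ s ∈ Finset.range m, C (-μ s) * X ^ s
  have hcoeff (j : ℕ) : c.coeff j = if j < m then -μ j else 0 := by
    simp only [c, finsetSum_coeff, coeff_C_mul_X_pow, Finset.sum_ite_eq, Finset.mem_range]
  have hc : c.degree < m :=
    (degree_lt_iff_coeff_zero c m).mpr fun j hj => by rw [hcoeff, if_neg (by omega)]
  refine ⟨c, hc, ?_⟩
  rw [PUniformized, hm]
  intro s hs
  have hblock (l : ℕ) (hl : l < q) :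
      (a + c * Gpoly ℚ (q * m) m).coeff (l * m + s) = a.coeff (l * m + s) - μ s := by
    rw [coeff_add, coeff_mul_gpoly_mul_add hc hl hs, hcoeff, if_pos hs, sub_eq_add_neg]
  obtain ⟨l₀, hl₀, hmin⟩ := Finset.exists_mem_eq_inf' hne fun l => a.coeff (l * m + s)
  rw [Finset.mem_range] at hl₀
  refine ⟨⟨l₀, hl₀, by rw [hblock l₀ hl₀, sub_eq_zero]; exact hmin.symm⟩, fun l hl => ?_⟩
  rw [hblock l hl, sub_nonneg]
  exact Finset.inf'_le _ (Finset.mem_range.mpr hl)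

theorem eq_zero_of_pUniformized_add_mul_gpoly (hm : n / (p * q) = m) {a c : ℚ[X]}
    (hc : c.degree < m) (ha : PUniformized n p q a)
    (hac : PUniformized n p q (a + c * Gpoly ℚ (q * m) m)) : c = 0 := by
  ext s
  rw [coeff_zero]
  by_cases hs : s < m
  · rw [PUniformized, hm] at ha hac
    obtain ⟨⟨l₁, hl₁, ha_zero⟩, ha_nonneg⟩ := ha s hs
    obtain ⟨⟨l₂, hl₂, hac_zero⟩, hac_nonneg⟩ := hac s hs
    have hblock (l : ℕ) (hl : l < q) :
        (a + c * Gpoly ℚ (q * m) m).coeff (l * m + s) = a.coeff (l * m + s) + c.coeff s := by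
      rw [coeff_add, coeff_mul_gpoly_mul_add hc hl hs]
    linarith [hblock l₁ hl₁, hblock l₂ hl₂, hac_nonneg l₁ hl₁, ha_nonneg l₂ hl₂]
  · exact coeff_eq_zero_of_degree_lt (hc.trans_le (by exact_mod_cast not_lt.mp hs))

end Uniformization

section Decomposition

variable {p q m : ℕ}

theorem exists_pUniformized_decomposition (hp : p.Prime) (hq : q.Prime) (hm : 0 < m)
    (hpf : ∀ r, r.Prime → r ∣ p * q * m → r = p ∨ r = q) {f : ℚ[X]}
    (hdeg : f.degree < (p * q * m : ℕ)) (hdvd : cyclotomic (p * q * m) ℚ ∣ f) :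
    ∃ a b : ℚ[X], a.degree < (q * m : ℕ) ∧ b.degree < (p * m : ℕ) ∧
      f = a * Gpoly ℚ (p * q * m) (q * m) + b * Gpoly ℚ (p * q * m) (p * m) ∧
      PUniformized (p * q * m) p q a := by
  have hn : p * q * m ≠ 0 := by positivity [hp.pos, hq.pos]
  have hqm : q * m ∣ p * q * m := ⟨p, by ring⟩
  have hpm : p * m ∣ p * q * m := ⟨q, by ring⟩
  obtain ⟨u, v, huv⟩ := exists_mul_add_mul_eq_prod_cyclotomic_inter
    ((p * q * m).divisors \ (q * m).divisors) ((p * q * m).divisors \ (p * m).divisors)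
  rw [sdiff_divisors_inter_sdiff_divisors hp hq hm hpf, Finset.prod_singleton,
    ← gpoly_eq_prod_cyclotomic hn hqm, ← gpoly_eq_prod_cyclotomic hn hpm] at huv
  obtain ⟨g, rfl⟩ := hdvd
  obtain ⟨a, b, ha, hb, hf⟩ := exists_degree_lt_of_eq_mul_gpoly_add hn hqm hpm
    (x := g * u) (y := g * v) (by rw [← huv]; ring) hdeg
  obtain ⟨c, hc, hu⟩ := exists_pUniformized_add_mul_gpoly (p := p)
    (Nat.mul_div_cancel_left m (by positivity [hp.pos, hq.pos])) hq.pos a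
  have hPQ : Gpoly ℚ (q * m) m * Gpoly ℚ (p * q * m) (q * m) =
      Gpoly ℚ (p * m) m * Gpoly ℚ (p * q * m) (p * m) := by
    rw [gpoly_mul_gpoly hn (dvd_mul_left m q) hqm, gpoly_mul_gpoly hn (dvd_mul_left m p) hpm]
  refine ⟨a + c * Gpoly ℚ (q * m) m, b - c * Gpoly ℚ (p * m) m, ?_, ?_,
    by linear_combination hf - c * hPQ, hu⟩
  · exact (degree_add_le _ _).trans_lt (max_lt ha
      ((degree_mul_gpoly_lt_iff (by positivity [hq.pos]) (dvd_mul_left m q)).mpr hc))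
  · exact (degree_sub_le _ _).trans_lt (max_lt hb
      ((degree_mul_gpoly_lt_iff (by positivity [hp.pos]) (dvd_mul_left m p)).mpr hc))

theorem pUniformized_decomposition_unique (hp : 0 < p) (hq : 0 < q) (hm : 0 < m)
    (hpq : p.Coprime q) {a₁ b₁ a₂ b₂ : ℚ[X]} (ha₁ : a₁.degree < (q * m : ℕ))
    (ha₂ : a₂.degree < (q * m : ℕ)) (hu₁ : PUniformized (p * q * m) p q a₁)
    (hu₂ : PUniformized (p * q * m) p q a₂)
    (h : a₁ * Gpoly ℚ (p * q * m) (q * m) + b₁ * Gpoly ℚ (p * q * m) (p * m) =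
      a₂ * Gpoly ℚ (p * q * m) (q * m) + b₂ * Gpoly ℚ (p * q * m) (p * m)) :
    a₁ = a₂ ∧ b₁ = b₂ := by
  have hn : p * q * m ≠ 0 := by positivity
  have hqm : q * m ∣ p * q * m := ⟨p, by ring⟩
  have hpm : p * m ∣ p * q * m := ⟨q, by ring⟩
  have hPQ : Gpoly ℚ (q * m) m * Gpoly ℚ (p * q * m) (q * m) =
      Gpoly ℚ (p * m) m * Gpoly ℚ (p * q * m) (p * m) := by
    rw [gpoly_mul_gpoly hn (dvd_mul_left m q) hqm, gpoly_mul_gpoly hn (dvd_mul_left m p) hpm]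
  have hcop : IsCoprime (Gpoly ℚ (q * m) m) (Gpoly ℚ (p * m) m) := by
    rw [gpoly_eq_prod_cyclotomic (by positivity) (dvd_mul_left m q),
      gpoly_eq_prod_cyclotomic (by positivity) (dvd_mul_left m p)]
    refine isCoprime_prod_cyclotomic (Finset.disjoint_left.mpr fun d hdq hdp => ?_)
    simp only [Finset.mem_sdiff, Nat.mem_divisors] at hdq hdp
    refine hdq.2 ⟨?_, hm.ne'⟩
    simpa [Nat.gcd_mul_right, hpq.symm.gcd_eq_one] using Nat.dvd_gcd hdq.1.1 hdp.1.1
  have hGq := gpoly_ne_zero (R := ℚ) hn hpm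
  have hdiff : (a₁ - a₂) * Gpoly ℚ (p * m) m = (b₂ - b₁) * Gpoly ℚ (q * m) m := by
    refine mul_right_cancel₀ hGq ?_
    linear_combination (a₁ - a₂) * hPQ.symm + Gpoly ℚ (q * m) m * h
  obtain ⟨c, hc⟩ : Gpoly ℚ (q * m) m ∣ a₁ - a₂ :=
    hcop.dvd_of_dvd_mul_right ⟨b₂ - b₁, by rw [hdiff, mul_comm]⟩
  have hcdeg : c.degree < m := by
    refine (degree_mul_gpoly_lt_iff (by positivity) (dvd_mul_left m q)).mp ?_
    rw [mul_comm, ← hc]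
    exact (degree_sub_le _ _).trans_lt (max_lt ha₁ ha₂)
  have hc0 : c = 0 := eq_zero_of_pUniformized_add_mul_gpoly
    (Nat.mul_div_cancel_left m (by positivity)) hcdeg hu₂
    (by rwa [mul_comm c, ← hc, add_sub_cancel])
  obtain rfl : a₁ = a₂ := by rwa [hc0, mul_zero, sub_eq_zero] at hc
  exact ⟨rfl, mul_right_cancel₀ hGq (add_left_cancel h)⟩

end Decomposition

theorem stmt_12 (p q e₁ e₂ n : ℕ) (hp : p.Prime) (hq : q.Prime) (hpq : p < q)
    (he₁ : 1 ≤ e₁) (he₂ : 1 ≤ e₂) (hn : n = p ^ e₁ * q ^ e₂)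
    (f : Polynomial ℚ) (hdeg : f.degree < (n : WithBot ℕ))
    (hdvd : cyclotomic n ℚ ∣ f) :
    ∃! hh : Polynomial ℚ × Polynomial ℚ,
      hh.1.degree < ((n / p : ℕ) : WithBot ℕ) ∧
      hh.2.degree < ((n / q : ℕ) : WithBot ℕ) ∧
      f = hh.1 * Gpoly ℚ n (n / p) + hh.2 * Gpoly ℚ n (n / q) ∧
      PUniformized n p q hh.1 := by
  obtain ⟨m, rfl⟩ : p * q ∣ n :=
    hn ▸ mul_dvd_mul (dvd_pow_self p (by omega)) (dvd_pow_self q (by omega))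
  have hm : 0 < m := Nat.pos_of_ne_zero fun h => by
    subst h; simp [hp.ne_zero, hq.ne_zero] at hn
  have hpf (r : ℕ) (hr : r.Prime) (hrn : r ∣ p * q * m) : r = p ∨ r = q := by
    rw [hn] at hrn
    refine (hr.dvd_mul.mp hrn).imp (fun h => ?_) (fun h => ?_)
    · exact (Nat.prime_dvd_prime_iff_eq hr hp).mp (hr.dvd_of_dvd_pow h)
    · exact (Nat.prime_dvd_prime_iff_eq hr hq).mp (hr.dvd_of_dvd_pow h)
  rw [show p * q * m / p = q * m by rw [mul_assoc, Nat.mul_div_cancel_left _ hp.pos],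
    show p * q * m / q = p * m by rw [mul_right_comm, Nat.mul_div_cancel _ hq.pos]]
  refine existsUnique_of_exists_of_unique ?_ ?_
  · obtain ⟨a, b, h⟩ := exists_pUniformized_decomposition hp hq hm hpf hdeg hdvd
    exact ⟨(a, b), h⟩
  · rintro ⟨a₁, b₁⟩ ⟨a₂, b₂⟩ ⟨ha₁, -, hf₁, hu₁⟩ ⟨ha₂, -, hf₂, hu₂⟩
    obtain ⟨rfl, rfl⟩ := pUniformized_decomposition_unique hp.pos hq.pos hm
      ((Nat.coprime_primes hp hq).mpr hpq.ne) ha₁ ha₂ hu₁ hu₂ (hf₁.symm.trans hf₂)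
    rfl
end

section
/- Let p < q be two distinct primes and let n = p^{e_1}·q^{e_2} with e_1, e_2 ≥ 1. Let f(x) ∈ ℤ[x] be a unital polynomial with deg f(x) < n that is divisible by Φ_n(x). Then the unique p-uniformized decomposition (h_{n/p}(x), h_{n/q}(x)) of f with respect to n is unital, i.e. both h_{n/p}(x) and h_{n/q}(x) have all coefficients in {0,1}. -/
open Polynomial

lemma coeff_mul_Gpoly_aux (h : Polynomial ℚ) {r n i : ℕ} (hr : 0 < r)
    (hd : h.degree < (r : WithBot ℕ)) (hrn : r ∣ n) (hi : i < n) :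
    (h * Gpoly ℚ n r).coeff i = h.coeff (i % r) := by
  rw [Gpoly, Finset.mul_sum, finset_sum_coeff]
  rw [Finset.sum_congr rfl (fun l _ => coeff_mul_X_pow' h (l * r) i)]
  rw [Finset.sum_eq_single (i / r)]
  · have h1 : i / r * r ≤ i := Nat.div_mul_le_self i r
    have h2 := Nat.mod_add_div i r
    rw [if_pos h1]
    congr 1
    have h2 := Nat.div_add_mod' i r
    omega
  · intro l hl hne
    split_ifs with hle
    · have hlle : l ≤ i / r := (Nat.le_div_iff_mul_le hr).mpr hle
      have hlt : l < i / r := lt_of_le_of_ne hlle hne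
      have h4 : l * r + r ≤ i / r * r := by
        calc l * r + r = (l + 1) * r := by ring
        _ ≤ i / r * r := Nat.mul_le_mul_right r hlt
      have h3 : i / r * r ≤ i := Nat.div_mul_le_self i r
      have hge : r ≤ i - l * r := by omega
      exact coeff_eq_zero_of_degree_lt (lt_of_lt_of_le hd (by exact_mod_cast hge))
    · rfl
  · intro hmem
    exfalso
    exact hmem (Finset.mem_range.mpr (Nat.div_lt_div_of_lt_of_dvd hrn hi))

lemma crt_aux (p q M : ℕ) (hp : 0 < p) (hq : 0 < q) (hM : 0 < M)
    (hco : Nat.Coprime q p) (a b s : ℕ) (ha : a < q) (hb : b < p) (hs : s < M) :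
    ∃ i < p * q * M, i % (q * M) = a * M + s ∧ i % (p * M) = b * M + s := by
  obtain ⟨k, hk1, hk2⟩ := Nat.chineseRemainder hco a b
  set c := k % (q * p) with hc_def
  have hc : c < q * p := Nat.mod_lt _ (by positivity)
  have hcq : c % q = a := by
    have h1 : c % q = k % q := Nat.mod_mod_of_dvd k (dvd_mul_right q p)
    have h2 : k % q = a % q := hk1
    rw [h1, h2, Nat.mod_eq_of_lt ha]
  have hcp : c % p = b := by
    have h1 : c % p = k % p := Nat.mod_mod_of_dvd k (dvd_mul_left p q)
    have h2 : k % p = b % p := hk2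
    rw [h1, h2, Nat.mod_eq_of_lt hb]
  refine ⟨c * M + s, ?_, ?_, ?_⟩
  · calc c * M + s < c * M + M := by omega
    _ = (c + 1) * M := by ring
    _ ≤ q * p * M := Nat.mul_le_mul_right M hc
    _ = p * q * M := by ring
  · obtain ⟨t, ht⟩ : ∃ t, c = q * t + a :=
      ⟨c / q, by rw [← hcq]; exact (Nat.div_add_mod c q).symm⟩
    have : c * M + s = (a * M + s) + t * (q * M) := by rw [ht]; ring
    rw [this, Nat.add_mul_mod_self_right, Nat.mod_eq_of_lt]
    calc a * M + s < a * M + M := by omega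
    _ = (a + 1) * M := by ring
    _ ≤ q * M := Nat.mul_le_mul_right M ha
  · obtain ⟨t, ht⟩ : ∃ t, c = p * t + b :=
      ⟨c / p, by rw [← hcp]; exact (Nat.div_add_mod c p).symm⟩
    have : c * M + s = (b * M + s) + t * (p * M) := by rw [ht]; ring
    rw [this, Nat.add_mul_mod_self_right, Nat.mod_eq_of_lt]
    calc b * M + s < b * M + M := by omega
    _ = (b + 1) * M := by ring
    _ ≤ p * M := Nat.mul_le_mul_right M hb

theorem stmt_13 (p q e₁ e₂ n : ℕ) (hp : p.Prime) (hq : q.Prime) (hpq : p < q)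
    (he₁ : 1 ≤ e₁) (he₂ : 1 ≤ e₂) (hn : n = p ^ e₁ * q ^ e₂)
    (f : Polynomial ℤ) (hf : ∀ i : ℕ, f.coeff i = 0 ∨ f.coeff i = 1)
    (hdeg : f.degree < (n : WithBot ℕ)) (hdvd : cyclotomic n ℤ ∣ f)
    (hnp hnq : Polynomial ℚ)
    (hdnp : hnp.degree < ((n / p : ℕ) : WithBot ℕ))
    (hdnq : hnq.degree < ((n / q : ℕ) : WithBot ℕ))
    (heq : f.map (Int.castRingHom ℚ) = hnp * Gpoly ℚ n (n / p) + hnq * Gpoly ℚ n (n / q))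
    (huni : PUniformized n p q hnp) :
    (∀ i : ℕ, hnp.coeff i = 0 ∨ hnp.coeff i = 1) ∧
    (∀ i : ℕ, hnq.coeff i = 0 ∨ hnq.coeff i = 1) := by
  have hp0 : 0 < p := hp.pos
  have hq0 : 0 < q := hq.pos
  set M : ℕ := p ^ (e₁ - 1) * q ^ (e₂ - 1) with hM_def
  have hM0 : 0 < M := by positivity
  have hnM : n = p * q * M := by
    rw [hn, hM_def]
    have h1 : p ^ e₁ = p * p ^ (e₁ - 1) := by
      conv_lhs => rw [show e₁ = 1 + (e₁ - 1) by omega]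
      rw [pow_add, pow_one]
    have h2 : q ^ e₂ = q * q ^ (e₂ - 1) := by
      conv_lhs => rw [show e₂ = 1 + (e₂ - 1) by omega]
      rw [pow_add, pow_one]
    rw [h1, h2]; ring
  have hrp : n / p = q * M := by rw [hnM, mul_assoc, Nat.mul_div_cancel_left _ hp0]
  have hrq : n / q = p * M := by
    rw [hnM, show p * q * M = q * (p * M) by ring, Nat.mul_div_cancel_left _ hq0]
  have hm : n / (p * q) = M := by
    rw [hnM, show p * q * M = p * q * M by rfl, Nat.mul_div_cancel_left _ (by positivity)]
  have hco : Nat.Coprime q p :=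
    (Nat.coprime_primes hq hp).mpr (fun h => absurd h.symm (Nat.ne_of_lt hpq))
  -- the key coefficient identity
  have hdvdp : (n / p) ∣ n := by rw [hrp, hnM]; exact ⟨p, by ring⟩
  have hdvdq : (n / q) ∣ n := by rw [hrq, hnM]; exact ⟨q, by ring⟩
  have hrp0 : 0 < n / p := by rw [hrp]; positivity
  have hrq0 : 0 < n / q := by rw [hrq]; positivity
  have key : ∀ i < n, ((f.coeff i : ℚ)) = hnp.coeff (i % (q * M)) + hnq.coeff (i % (p * M)) := by
    intro i hi
    have := congrArg (fun g => g.coeff i) heq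
    simp only [coeff_map, coeff_add, eq_intCast, Int.cast_id] at this
    rw [coeff_mul_Gpoly_aux hnp hrp0 hdnp hdvdp hi,
        coeff_mul_Gpoly_aux hnq hrq0 hdnq hdvdq hi] at this
    rw [← hrp, ← hrq]
    exact_mod_cast this
  have hfq : ∀ i : ℕ, (f.coeff i : ℚ) = 0 ∨ (f.coeff i : ℚ) = 1 := by
    intro i; rcases hf i with h | h <;> [left; right] <;> exact_mod_cast h
  -- uniformization restated
  have huni' : ∀ s < M, (∃ l < q, hnp.coeff (l * M + s) = 0) ∧
      (∀ l < q, 0 ≤ hnp.coeff (l * M + s)) := by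
    intro s hs
    have := huni s (by rw [hm]; exact hs)
    rwa [hm] at this
  -- Claim C : all coefficients of hnq with index < p*M are 0 or 1
  have claimC : ∀ v < p * M, hnq.coeff v = 0 ∨ hnq.coeff v = 1 := by
    intro v hv
    have hs : v % M < M := Nat.mod_lt _ hM0
    have hb : v / M < p := Nat.div_lt_of_lt_mul (mul_comm p M ▸ hv)
    obtain ⟨⟨l₀, hl₀q, hl₀⟩, _⟩ := huni' (v % M) hs
    obtain ⟨i, hi, hiu, hiv⟩ := crt_aux p q M hp0 hq0 hM0 hco l₀ (v / M) (v % M) hl₀q hb hs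
    have hk := key i (by rwa [← hnM] at hi)
    rw [hiu, hiv, hl₀, zero_add] at hk
    have hv' : v / M * M + v % M = v := Nat.div_add_mod' v M
    rw [hv'] at hk
    rcases hfq i with h | h <;> [left; right] <;> linarith
  -- Claim B : all coefficients of hnp with index < q*M are 0 or 1
  have claimB : ∀ u < q * M, hnp.coeff u = 0 ∨ hnp.coeff u = 1 := by
    intro u hu
    have hs : u % M < M := Nat.mod_lt _ hM0
    have ha : u / M < q := Nat.div_lt_of_lt_mul (mul_comm q M ▸ hu)
    have hcs : hnq.coeff (u % M) = 0 ∨ hnq.coeff (u % M) = 1 := by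
      apply claimC
      calc u % M < M := hs
      _ = 1 * M := (one_mul M).symm
      _ ≤ p * M := Nat.mul_le_mul_right M hp0
    obtain ⟨_, hpos⟩ := huni' (u % M) hs
    have hbu : 0 ≤ hnp.coeff u := by
      have := hpos (u / M) ha
      rwa [Nat.div_add_mod' u M] at this
    obtain ⟨i, hi, hiu, hiv⟩ := crt_aux p q M hp0 hq0 hM0 hco (u / M) 0 (u % M) ha hp0 hs
    have hk := key i (by rwa [← hnM] at hi)
    rw [hiu, hiv, zero_mul, zero_add] at hk
    have hu' : u / M * M + u % M = u := Nat.div_add_mod' u M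
    rw [hu'] at hk
    rcases hfq i with h | h <;> rcases hcs with h2 | h2
    · left; linarith
    · left; linarith
    · right; linarith
    · left; linarith
  constructor
  · intro i
    by_cases hi : i < q * M
    · exact claimB i hi
    · left
      apply coeff_eq_zero_of_degree_lt
      apply lt_of_lt_of_le (hrp ▸ hdnp)
      exact_mod_cast Nat.le_of_not_lt hi
  · intro i
    by_cases hi : i < p * M
    · exact claimC i hi
    · left
      apply coeff_eq_zero_of_degree_lt
      apply lt_of_lt_of_le (hrq ▸ hdnq)
      exact_mod_cast Nat.le_of_not_lt hi
end

section
/- There is no unital polynomial f(x) ∈ ℤ[x] with deg f(x) < 45 and f(1) = 22 that is divisible by both Φ_15(x) and Φ_45(x). -/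
open Polynomial

private lemma aux_stmt17 (c : ℕ → ℤ) (hb : ∀ n, 0 ≤ c n ∧ c n ≤ 1)
    (hper : ∀ n, c (n + 45) = c n)
    (hrel : ∀ n, c n + c (n + 14) = c (n + 5) + c (n + 9))
    (hsum : ∑ i ∈ Finset.range 45, c i = 22) : False := by
  have hd5 : ∀ n, c (n + 5 + 9) - c (n + 5) = c (n + 9) - c n := by
    intro n
    have e : n + 5 + 9 = n + 14 := by ring
    rw [e]; linarith [hrel n]
  have ht9 : ∀ n, c (n + 9 + 5) - c (n + 9) = c (n + 5) - c n := by
    intro n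
    have e : n + 9 + 5 = n + 14 := by ring
    rw [e]; linarith [hrel n]
  have hdmul : ∀ q r, c (r + 5 * q + 9) - c (r + 5 * q) = c (r + 9) - c r := by
    intro q
    induction q with
    | zero => intro r; norm_num
    | succ p ih =>
      intro r
      have e : r + 5 * (p + 1) = r + 5 + 5 * p := by ring
      rw [e]
      have h1 := ih (r + 5)
      have h2 := hd5 r
      linarith
  have htmul : ∀ q r, c (r + 9 * q + 5) - c (r + 9 * q) = c (r + 5) - c r := by
    intro q
    induction q with
    | zero => intro r; norm_num
    | succ p ih =>
      intro r
      have e : r + 9 * (p + 1) = r + 9 + 9 * p := by ring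
      rw [e]
      have h1 := ih (r + 9)
      have h2 := ht9 r
      linarith
  have hd : ∀ n, c (n + 9) - c n = c (n % 5 + 9) - c (n % 5) := by
    intro n
    have h := hdmul (n / 5) (n % 5)
    have e : n = n % 5 + 5 * (n / 5) := by omega
    rw [← e] at h
    exact h
  have ht : ∀ n, c (n + 5) - c n = c (n % 9 + 5) - c (n % 9) := by
    intro n
    have h := htmul (n / 9) (n % 9)
    have e : n = n % 9 + 9 * (n / 9) := by omega
    rw [← e] at h
    exact h
  have hE : (c 9 - c 0) + (c 10 - c 1) + (c 11 - c 2) + (c 12 - c 3) + (c 13 - c 4) = 0 := by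
    have h9 := hd 9
    have h18 := hd 18
    have h27 := hd 27
    have h36 := hd 36
    norm_num at h9 h18 h27 h36
    have hp := hper 0
    linarith
  have hT : (c 5 - c 0) + (c 6 - c 1) + (c 7 - c 2) + (c 8 - c 3) + (c 9 - c 4)
      + (c 10 - c 5) + (c 11 - c 6) + (c 12 - c 7) + (c 13 - c 8) = 0 := by
    have h10 := ht 10
    have h15 := ht 15
    have h20 := ht 20
    have h25 := ht 25
    have h30 := ht 30
    have h35 := ht 35
    have h40 := ht 40
    norm_num at h10 h15 h20 h25 h30 h35 h40
    have hp := hper 0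
    linarith
  have hb0 := hb 0
  have hb1 := hb 1
  have hb2 := hb 2
  have hb3 := hb 3
  have hb4 := hb 4
  have hb5 := hb 5
  have hb6 := hb 6
  have hb7 := hb 7
  have hb8 := hb 8
  have hb9 := hb 9
  have hb10 := hb 10
  have hb11 := hb 11
  have hb12 := hb 12
  have hb13 := hb 13
  by_cases hA : c 9 = c 0 ∧ c 10 = c 1 ∧ c 11 = c 2 ∧ c 12 = c 3 ∧ c 13 = c 4
  · -- c is 9-periodic
    obtain ⟨a1, a2, a3, a4, a5⟩ := hA
    have hstep9 : ∀ n, c (n + 9) = c n := by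
      intro n
      have h := hd n
      have h5 : n % 5 = 0 ∨ n % 5 = 1 ∨ n % 5 = 2 ∨ n % 5 = 3 ∨ n % 5 = 4 := by omega
      rcases h5 with e | e | e | e | e <;> rw [e] at h <;> norm_num at h <;> omega
    have hmul9 : ∀ q r, c (r + 9 * q) = c r := by
      intro q
      induction q with
      | zero => intro r; norm_num
      | succ p ih =>
        intro r
        have e : r + 9 * (p + 1) = r + 9 * p + 9 := by ring
        rw [e, hstep9, ih]
    have hmod9 : ∀ n, c n = c (n % 9) := by
      intro n
      have h := hmul9 (n / 9) (n % 9)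
      have e : n = n % 9 + 9 * (n / 9) := by omega
      rw [← e] at h
      exact h
    have S9 : c 9 = c 0 := by have h := hmod9 9; norm_num at h; exact h
    have S10 : c 10 = c 1 := by have h := hmod9 10; norm_num at h; exact h
    have S11 : c 11 = c 2 := by have h := hmod9 11; norm_num at h; exact h
    have S12 : c 12 = c 3 := by have h := hmod9 12; norm_num at h; exact h
    have S13 : c 13 = c 4 := by have h := hmod9 13; norm_num at h; exact h
    have S14 : c 14 = c 5 := by have h := hmod9 14; norm_num at h; exact h
    have S15 : c 15 = c 6 := by have h := hmod9 15; norm_num at h; exact h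
    have S16 : c 16 = c 7 := by have h := hmod9 16; norm_num at h; exact h
    have S17 : c 17 = c 8 := by have h := hmod9 17; norm_num at h; exact h
    have S18 : c 18 = c 0 := by have h := hmod9 18; norm_num at h; exact h
    have S19 : c 19 = c 1 := by have h := hmod9 19; norm_num at h; exact h
    have S20 : c 20 = c 2 := by have h := hmod9 20; norm_num at h; exact h
    have S21 : c 21 = c 3 := by have h := hmod9 21; norm_num at h; exact h
    have S22 : c 22 = c 4 := by have h := hmod9 22; norm_num at h; exact h
    have S23 : c 23 = c 5 := by have h := hmod9 23; norm_num at h; exact h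
    have S24 : c 24 = c 6 := by have h := hmod9 24; norm_num at h; exact h
    have S25 : c 25 = c 7 := by have h := hmod9 25; norm_num at h; exact h
    have S26 : c 26 = c 8 := by have h := hmod9 26; norm_num at h; exact h
    have S27 : c 27 = c 0 := by have h := hmod9 27; norm_num at h; exact h
    have S28 : c 28 = c 1 := by have h := hmod9 28; norm_num at h; exact h
    have S29 : c 29 = c 2 := by have h := hmod9 29; norm_num at h; exact h
    have S30 : c 30 = c 3 := by have h := hmod9 30; norm_num at h; exact h
    have S31 : c 31 = c 4 := by have h := hmod9 31; norm_num at h; exact h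
    have S32 : c 32 = c 5 := by have h := hmod9 32; norm_num at h; exact h
    have S33 : c 33 = c 6 := by have h := hmod9 33; norm_num at h; exact h
    have S34 : c 34 = c 7 := by have h := hmod9 34; norm_num at h; exact h
    have S35 : c 35 = c 8 := by have h := hmod9 35; norm_num at h; exact h
    have S36 : c 36 = c 0 := by have h := hmod9 36; norm_num at h; exact h
    have S37 : c 37 = c 1 := by have h := hmod9 37; norm_num at h; exact h
    have S38 : c 38 = c 2 := by have h := hmod9 38; norm_num at h; exact h
    have S39 : c 39 = c 3 := by have h := hmod9 39; norm_num at h; exact h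
    have S40 : c 40 = c 4 := by have h := hmod9 40; norm_num at h; exact h
    have S41 : c 41 = c 5 := by have h := hmod9 41; norm_num at h; exact h
    have S42 : c 42 = c 6 := by have h := hmod9 42; norm_num at h; exact h
    have S43 : c 43 = c 7 := by have h := hmod9 43; norm_num at h; exact h
    have S44 : c 44 = c 8 := by have h := hmod9 44; norm_num at h; exact h
    simp only [Finset.sum_range_succ, Finset.sum_range_zero] at hsum
    omega
  · by_cases hB : c 5 = c 0 ∧ c 6 = c 1 ∧ c 7 = c 2 ∧ c 8 = c 3 ∧ c 9 = c 4
        ∧ c 10 = c 5 ∧ c 11 = c 6 ∧ c 12 = c 7 ∧ c 13 = c 8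
    · -- c is 5-periodic
      obtain ⟨b1', b2', b3', b4', b5', b6', b7', b8', b9'⟩ := hB
      have hstep5 : ∀ n, c (n + 5) = c n := by
        intro n
        have h := ht n
        have h9 : n % 9 = 0 ∨ n % 9 = 1 ∨ n % 9 = 2 ∨ n % 9 = 3 ∨ n % 9 = 4 ∨ n % 9 = 5
            ∨ n % 9 = 6 ∨ n % 9 = 7 ∨ n % 9 = 8 := by omega
        rcases h9 with e | e | e | e | e | e | e | e | e <;> rw [e] at h <;> norm_num at h <;> omega
      have hmul5 : ∀ q r, c (r + 5 * q) = c r := by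
        intro q
        induction q with
        | zero => intro r; norm_num
        | succ p ih =>
          intro r
          have e : r + 5 * (p + 1) = r + 5 * p + 5 := by ring
          rw [e, hstep5, ih]
      have hmod5 : ∀ n, c n = c (n % 5) := by
        intro n
        have h := hmul5 (n / 5) (n % 5)
        have e : n = n % 5 + 5 * (n / 5) := by omega
        rw [← e] at h
        exact h
      have T5 : c 5 = c 0 := by have h := hmod5 5; norm_num at h; exact h
      have T6 : c 6 = c 1 := by have h := hmod5 6; norm_num at h; exact h
      have T7 : c 7 = c 2 := by have h := hmod5 7; norm_num at h; exact h
      have T8 : c 8 = c 3 := by have h := hmod5 8; norm_num at h; exact h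
      have T9 : c 9 = c 4 := by have h := hmod5 9; norm_num at h; exact h
      have T10 : c 10 = c 0 := by have h := hmod5 10; norm_num at h; exact h
      have T11 : c 11 = c 1 := by have h := hmod5 11; norm_num at h; exact h
      have T12 : c 12 = c 2 := by have h := hmod5 12; norm_num at h; exact h
      have T13 : c 13 = c 3 := by have h := hmod5 13; norm_num at h; exact h
      have T14 : c 14 = c 4 := by have h := hmod5 14; norm_num at h; exact h
      have T15 : c 15 = c 0 := by have h := hmod5 15; norm_num at h; exact h
      have T16 : c 16 = c 1 := by have h := hmod5 16; norm_num at h; exact h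
      have T17 : c 17 = c 2 := by have h := hmod5 17; norm_num at h; exact h
      have T18 : c 18 = c 3 := by have h := hmod5 18; norm_num at h; exact h
      have T19 : c 19 = c 4 := by have h := hmod5 19; norm_num at h; exact h
      have T20 : c 20 = c 0 := by have h := hmod5 20; norm_num at h; exact h
      have T21 : c 21 = c 1 := by have h := hmod5 21; norm_num at h; exact h
      have T22 : c 22 = c 2 := by have h := hmod5 22; norm_num at h; exact h
      have T23 : c 23 = c 3 := by have h := hmod5 23; norm_num at h; exact h
      have T24 : c 24 = c 4 := by have h := hmod5 24; norm_num at h; exact h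
      have T25 : c 25 = c 0 := by have h := hmod5 25; norm_num at h; exact h
      have T26 : c 26 = c 1 := by have h := hmod5 26; norm_num at h; exact h
      have T27 : c 27 = c 2 := by have h := hmod5 27; norm_num at h; exact h
      have T28 : c 28 = c 3 := by have h := hmod5 28; norm_num at h; exact h
      have T29 : c 29 = c 4 := by have h := hmod5 29; norm_num at h; exact h
      have T30 : c 30 = c 0 := by have h := hmod5 30; norm_num at h; exact h
      have T31 : c 31 = c 1 := by have h := hmod5 31; norm_num at h; exact h
      have T32 : c 32 = c 2 := by have h := hmod5 32; norm_num at h; exact h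
      have T33 : c 33 = c 3 := by have h := hmod5 33; norm_num at h; exact h
      have T34 : c 34 = c 4 := by have h := hmod5 34; norm_num at h; exact h
      have T35 : c 35 = c 0 := by have h := hmod5 35; norm_num at h; exact h
      have T36 : c 36 = c 1 := by have h := hmod5 36; norm_num at h; exact h
      have T37 : c 37 = c 2 := by have h := hmod5 37; norm_num at h; exact h
      have T38 : c 38 = c 3 := by have h := hmod5 38; norm_num at h; exact h
      have T39 : c 39 = c 4 := by have h := hmod5 39; norm_num at h; exact h
      have T40 : c 40 = c 0 := by have h := hmod5 40; norm_num at h; exact h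
      have T41 : c 41 = c 1 := by have h := hmod5 41; norm_num at h; exact h
      have T42 : c 42 = c 2 := by have h := hmod5 42; norm_num at h; exact h
      have T43 : c 43 = c 3 := by have h := hmod5 43; norm_num at h; exact h
      have T44 : c 44 = c 4 := by have h := hmod5 44; norm_num at h; exact h
      simp only [Finset.sum_range_succ, Finset.sum_range_zero] at hsum
      omega
    · -- mixed case: find a +1 jump in each direction
      have hA' : ¬(c 9 = c 0) ∨ ¬(c 10 = c 1) ∨ ¬(c 11 = c 2) ∨ ¬(c 12 = c 3) ∨ ¬(c 13 = c 4) := by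
        by_contra hcon
        push_neg at hcon
        exact hA ⟨hcon.1, hcon.2.1, hcon.2.2.1, hcon.2.2.2.1, hcon.2.2.2.2⟩
      have hB' : ¬(c 5 = c 0) ∨ ¬(c 6 = c 1) ∨ ¬(c 7 = c 2) ∨ ¬(c 8 = c 3) ∨ ¬(c 9 = c 4)
          ∨ ¬(c 10 = c 5) ∨ ¬(c 11 = c 6) ∨ ¬(c 12 = c 7) ∨ ¬(c 13 = c 8) := by
        by_contra hcon
        push_neg at hcon
        exact hB ⟨hcon.1, hcon.2.1, hcon.2.2.1, hcon.2.2.2.1, hcon.2.2.2.2.1,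
          hcon.2.2.2.2.2.1, hcon.2.2.2.2.2.2.1, hcon.2.2.2.2.2.2.2.1, hcon.2.2.2.2.2.2.2.2⟩
      have hj' : c 9 - c 0 = 1 ∨ c 10 - c 1 = 1 ∨ c 11 - c 2 = 1 ∨ c 12 - c 3 = 1
          ∨ c 13 - c 4 = 1 := by
        rcases hA' with h | h | h | h | h <;> omega
      have hi' : c 5 - c 0 = 1 ∨ c 6 - c 1 = 1 ∨ c 7 - c 2 = 1 ∨ c 8 - c 3 = 1 ∨ c 9 - c 4 = 1
          ∨ c 10 - c 5 = 1 ∨ c 11 - c 6 = 1 ∨ c 12 - c 7 = 1 ∨ c 13 - c 8 = 1 := by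
        rcases hB' with h | h | h | h | h | h | h | h | h <;> omega
      have hj : ∃ j0, j0 < 5 ∧ c (j0 + 9) - c j0 = 1 := by
        rcases hj' with h | h | h | h | h
        exacts [⟨0, by norm_num, by simpa using h⟩, ⟨1, by norm_num, by simpa using h⟩,
          ⟨2, by norm_num, by simpa using h⟩, ⟨3, by norm_num, by simpa using h⟩,
          ⟨4, by norm_num, by simpa using h⟩]
      have hi : ∃ i0, i0 < 9 ∧ c (i0 + 5) - c i0 = 1 := by
        rcases hi' with h | h | h | h | h | h | h | h | h
        exacts [⟨0, by norm_num, by simpa using h⟩, ⟨1, by norm_num, by simpa using h⟩,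
          ⟨2, by norm_num, by simpa using h⟩, ⟨3, by norm_num, by simpa using h⟩,
          ⟨4, by norm_num, by simpa using h⟩, ⟨5, by norm_num, by simpa using h⟩,
          ⟨6, by norm_num, by simpa using h⟩, ⟨7, by norm_num, by simpa using h⟩,
          ⟨8, by norm_num, by simpa using h⟩]
      obtain ⟨j0, hj0, hdj⟩ := hj
      obtain ⟨i0, hi0, hti⟩ := hi
      have hz : ∀ n, c (j0 + 5 * n) = 0 := by
        intro n
        have h := hd (j0 + 5 * n)
        have e : (j0 + 5 * n) % 5 = j0 := by omega
        rw [e] at h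
        have bb1 := hb (j0 + 5 * n)
        have bb2 := hb (j0 + 5 * n + 9)
        omega
      have ho : ∀ n, c (i0 + 9 * n + 5) = 1 := by
        intro n
        have h := ht (i0 + 9 * n)
        have e : (i0 + 9 * n) % 9 = i0 := by omega
        rw [e] at h
        have bb1 := hb (i0 + 9 * n)
        have bb2 := hb (i0 + 9 * n + 5)
        omega
      have h1 := ho ((4 * (j0 + 10 - i0)) % 5)
      have h2 := hz ((i0 + 9 * ((4 * (j0 + 10 - i0)) % 5) + 5 - j0) / 5)
      have e : j0 + 5 * ((i0 + 9 * ((4 * (j0 + 10 - i0)) % 5) + 5 - j0) / 5)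
          = i0 + 9 * ((4 * (j0 + 10 - i0)) % 5) + 5 := by omega
      rw [e] at h2
      omega

theorem stmt_17 :
    ¬ ∃ f : Polynomial ℤ, (∀ i : ℕ, f.coeff i = 0 ∨ f.coeff i = 1) ∧
      f.degree < 45 ∧ f.eval 1 = 22 ∧ cyclotomic 15 ℤ ∣ f ∧ cyclotomic 45 ℤ ∣ f := by
  rintro ⟨f, hcoef, hdeg, heval, h15, h45d⟩
  have hf_ne : f ≠ 0 := by rintro rfl; simp at heval
  have irr15 : Irreducible (cyclotomic 15 ℤ) := cyclotomic.irreducible (by norm_num)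
  have irr45 : Irreducible (cyclotomic 45 ℤ) := cyclotomic.irreducible (by norm_num)
  have prime15 : Prime (cyclotomic 15 ℤ) :=
    UniqueFactorizationMonoid.irreducible_iff_prime.mp irr15
  obtain ⟨h, hfh⟩ := h45d
  have hnd : ¬ cyclotomic 15 ℤ ∣ cyclotomic 45 ℤ := by
    rintro ⟨k, hk⟩
    rcases irr45.isUnit_or_isUnit hk with hu | hu
    · have h0 := natDegree_eq_zero_of_isUnit hu
      rw [natDegree_cyclotomic] at h0
      exact absurd h0 (by decide)
    · have hk0 : k ≠ 0 := hu.ne_zero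
      have h0 := congrArg natDegree hk
      rw [natDegree_mul (cyclotomic_ne_zero 15 ℤ) hk0, natDegree_cyclotomic,
        natDegree_cyclotomic, natDegree_eq_zero_of_isUnit hu] at h0
      exact absurd h0 (by decide)
  have h15h : cyclotomic 15 ℤ ∣ h := by
    refine (prime15.dvd_or_dvd ?_).resolve_left hnd
    rw [← hfh]; exact h15
  obtain ⟨g, hg⟩ := h15h
  have hf : f = cyclotomic 15 ℤ * cyclotomic 45 ℤ * g := by rw [hfh, hg]; ring
  have hg_ne : g ≠ 0 := by
    rintro rfl; exact hf_ne (by rw [hf, mul_zero])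
  have hnat : f.natDegree < 45 := by
    rw [natDegree_lt_iff_degree_lt hf_ne]; exact_mod_cast hdeg
  have hgdeg : g.natDegree ≤ 12 := by
    have h2 : f.natDegree = Nat.totient 15 + Nat.totient 45 + g.natDegree := by
      rw [hf, natDegree_mul (mul_ne_zero (cyclotomic_ne_zero _ ℤ) (cyclotomic_ne_zero _ ℤ)) hg_ne,
        natDegree_mul (cyclotomic_ne_zero _ ℤ) (cyclotomic_ne_zero _ ℤ),
        natDegree_cyclotomic, natDegree_cyclotomic]
    have t15 : Nat.totient 15 = 8 := by decide
    have t45 : Nat.totient 45 = 24 := by decide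
    omega
  have hg0 : ∀ t : ℕ, 13 ≤ t → g.coeff t = 0 := fun t ht =>
    coeff_eq_zero_of_natDegree_lt (by omega)
  have hf0 : ∀ t : ℕ, 45 ≤ t → f.coeff t = 0 := fun t ht =>
    coeff_eq_zero_of_natDegree_lt (by omega)
  have hprod : (X^9 - 1 : ℤ[X]) * (X^5 - 1) * (cyclotomic 15 ℤ * cyclotomic 45 ℤ)
      = (X^45 - 1) * (X - 1) := by
    have h45 := prod_cyclotomic_eq_X_pow_sub_one (show 0 < 45 by norm_num) ℤ
    have h9 := prod_cyclotomic_eq_X_pow_sub_one (show 0 < 9 by norm_num) ℤ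
    have h5 := prod_cyclotomic_eq_X_pow_sub_one (show 0 < 5 by norm_num) ℤ
    rw [show Nat.divisors 45 = {1,3,5,9,15,45} from by decide,
      Finset.prod_insert (by decide), Finset.prod_insert (by decide),
      Finset.prod_insert (by decide), Finset.prod_insert (by decide),
      Finset.prod_insert (by decide), Finset.prod_singleton] at h45
    rw [show Nat.divisors 9 = {1,3,9} from by decide,
      Finset.prod_insert (by decide), Finset.prod_insert (by decide),
      Finset.prod_singleton] at h9
    rw [show Nat.divisors 5 = {1,5} from by decide,
      Finset.prod_insert (by decide), Finset.prod_singleton] at h5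
    rw [← h45, ← h9, ← h5, cyclotomic_one]
    ring
  have hkey : f * X^14 - f * X^9 - f * X^5 + f = g * X^46 - g * X^45 - g * X^1 + g := by
    rw [hf]; linear_combination g * hprod
  have hc : ∀ k : ℕ,
      (if 14 ≤ k then f.coeff (k - 14) else 0) - (if 9 ≤ k then f.coeff (k - 9) else 0)
        - (if 5 ≤ k then f.coeff (k - 5) else 0) + f.coeff k
      = (if 46 ≤ k then g.coeff (k - 46) else 0) - (if 45 ≤ k then g.coeff (k - 45) else 0)
        - (if 1 ≤ k then g.coeff (k - 1) else 0) + g.coeff k := by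
    intro k
    have h0 := congrArg (fun p => p.coeff k) hkey
    simpa only [coeff_sub, coeff_add, coeff_mul_X_pow'] using h0
  have hB : ∀ i : ℕ, 0 ≤ f.coeff i ∧ f.coeff i ≤ 1 := fun i => by
    rcases hcoef i with h0 | h0 <;> omega
  have E0 := hc 0
  have E1 := hc 1
  have E2 := hc 2
  have E3 := hc 3
  have E4 := hc 4
  have E5 := hc 5
  have E6 := hc 6
  have E7 := hc 7
  have E8 := hc 8
  have E9 := hc 9
  have E10 := hc 10
  have E11 := hc 11
  have E12 := hc 12
  have E13 := hc 13
  have E14 := hc 14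
  have E15 := hc 15
  have E16 := hc 16
  have E17 := hc 17
  have E18 := hc 18
  have E19 := hc 19
  have E20 := hc 20
  have E21 := hc 21
  have E22 := hc 22
  have E23 := hc 23
  have E24 := hc 24
  have E25 := hc 25
  have E26 := hc 26
  have E27 := hc 27
  have E28 := hc 28
  have E29 := hc 29
  have E30 := hc 30
  have E31 := hc 31
  have E32 := hc 32
  have E33 := hc 33
  have E34 := hc 34
  have E35 := hc 35
  have E36 := hc 36
  have E37 := hc 37
  have E38 := hc 38
  have E39 := hc 39
  have E40 := hc 40
  have E41 := hc 41
  have E42 := hc 42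
  have E43 := hc 43
  have E44 := hc 44
  have E45 := hc 45
  have E46 := hc 46
  have E47 := hc 47
  have E48 := hc 48
  have E49 := hc 49
  have E50 := hc 50
  have E51 := hc 51
  have E52 := hc 52
  have E53 := hc 53
  have E54 := hc 54
  have E55 := hc 55
  have E56 := hc 56
  have E57 := hc 57
  have E58 := hc 58
  norm_num at E0 E1 E2 E3 E4 E5 E6 E7 E8 E9 E10 E11 E12 E13 E14 E15 E16 E17 E18 E19 E20 E21 E22 E23 E24 E25 E26 E27 E28 E29 E30 E31 E32 E33 E34 E35 E36 E37 E38 E39 E40 E41 E42 E43 E44 E45 E46 E47 E48 E49 E50 E51 E52 E53 E54 E55 E56 E57 E58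
  have F45 := hf0 45 (by norm_num)
  have F46 := hf0 46 (by norm_num)
  have F47 := hf0 47 (by norm_num)
  have F48 := hf0 48 (by norm_num)
  have F49 := hf0 49 (by norm_num)
  have F50 := hf0 50 (by norm_num)
  have F51 := hf0 51 (by norm_num)
  have F52 := hf0 52 (by norm_num)
  have F53 := hf0 53 (by norm_num)
  have F54 := hf0 54 (by norm_num)
  have F55 := hf0 55 (by norm_num)
  have F56 := hf0 56 (by norm_num)
  have F57 := hf0 57 (by norm_num)
  have F58 := hf0 58 (by norm_num)
  have G13 := hg0 13 (by norm_num)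
  have G14 := hg0 14 (by norm_num)
  have G15 := hg0 15 (by norm_num)
  have G16 := hg0 16 (by norm_num)
  have G17 := hg0 17 (by norm_num)
  have G18 := hg0 18 (by norm_num)
  have G19 := hg0 19 (by norm_num)
  have G20 := hg0 20 (by norm_num)
  have G21 := hg0 21 (by norm_num)
  have G22 := hg0 22 (by norm_num)
  have G23 := hg0 23 (by norm_num)
  have G24 := hg0 24 (by norm_num)
  have G25 := hg0 25 (by norm_num)
  have G26 := hg0 26 (by norm_num)
  have G27 := hg0 27 (by norm_num)
  have G28 := hg0 28 (by norm_num)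
  have G29 := hg0 29 (by norm_num)
  have G30 := hg0 30 (by norm_num)
  have G31 := hg0 31 (by norm_num)
  have G32 := hg0 32 (by norm_num)
  have G33 := hg0 33 (by norm_num)
  have G34 := hg0 34 (by norm_num)
  have G35 := hg0 35 (by norm_num)
  have G36 := hg0 36 (by norm_num)
  have G37 := hg0 37 (by norm_num)
  have G38 := hg0 38 (by norm_num)
  have G39 := hg0 39 (by norm_num)
  have G40 := hg0 40 (by norm_num)
  have G41 := hg0 41 (by norm_num)
  have G42 := hg0 42 (by norm_num)
  have G43 := hg0 43 (by norm_num)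
  have G44 := hg0 44 (by norm_num)
  have G45 := hg0 45 (by norm_num)
  have G46 := hg0 46 (by norm_num)
  have G47 := hg0 47 (by norm_num)
  have G48 := hg0 48 (by norm_num)
  have G49 := hg0 49 (by norm_num)
  have G50 := hg0 50 (by norm_num)
  have G51 := hg0 51 (by norm_num)
  have G52 := hg0 52 (by norm_num)
  have G53 := hg0 53 (by norm_num)
  have G54 := hg0 54 (by norm_num)
  have G55 := hg0 55 (by norm_num)
  have G56 := hg0 56 (by norm_num)
  have G57 := hg0 57 (by norm_num)
  have G58 := hg0 58 (by norm_num)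
  have R0 : f.coeff 0 + f.coeff 14 = f.coeff 5 + f.coeff 9 := by
    linarith only [E14, G13, G14]
  have R1 : f.coeff 1 + f.coeff 15 = f.coeff 6 + f.coeff 10 := by
    linarith only [E15, G14, G15]
  have R2 : f.coeff 2 + f.coeff 16 = f.coeff 7 + f.coeff 11 := by
    linarith only [E16, G15, G16]
  have R3 : f.coeff 3 + f.coeff 17 = f.coeff 8 + f.coeff 12 := by
    linarith only [E17, G16, G17]
  have R4 : f.coeff 4 + f.coeff 18 = f.coeff 9 + f.coeff 13 := by
    linarith only [E18, G17, G18]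
  have R5 : f.coeff 5 + f.coeff 19 = f.coeff 10 + f.coeff 14 := by
    linarith only [E19, G18, G19]
  have R6 : f.coeff 6 + f.coeff 20 = f.coeff 11 + f.coeff 15 := by
    linarith only [E20, G19, G20]
  have R7 : f.coeff 7 + f.coeff 21 = f.coeff 12 + f.coeff 16 := by
    linarith only [E21, G20, G21]
  have R8 : f.coeff 8 + f.coeff 22 = f.coeff 13 + f.coeff 17 := by
    linarith only [E22, G21, G22]
  have R9 : f.coeff 9 + f.coeff 23 = f.coeff 14 + f.coeff 18 := by
    linarith only [E23, G22, G23]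
  have R10 : f.coeff 10 + f.coeff 24 = f.coeff 15 + f.coeff 19 := by
    linarith only [E24, G23, G24]
  have R11 : f.coeff 11 + f.coeff 25 = f.coeff 16 + f.coeff 20 := by
    linarith only [E25, G24, G25]
  have R12 : f.coeff 12 + f.coeff 26 = f.coeff 17 + f.coeff 21 := by
    linarith only [E26, G25, G26]
  have R13 : f.coeff 13 + f.coeff 27 = f.coeff 18 + f.coeff 22 := by
    linarith only [E27, G26, G27]
  have R14 : f.coeff 14 + f.coeff 28 = f.coeff 19 + f.coeff 23 := by
    linarith only [E28, G27, G28]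
  have R15 : f.coeff 15 + f.coeff 29 = f.coeff 20 + f.coeff 24 := by
    linarith only [E29, G28, G29]
  have R16 : f.coeff 16 + f.coeff 30 = f.coeff 21 + f.coeff 25 := by
    linarith only [E30, G29, G30]
  have R17 : f.coeff 17 + f.coeff 31 = f.coeff 22 + f.coeff 26 := by
    linarith only [E31, G30, G31]
  have R18 : f.coeff 18 + f.coeff 32 = f.coeff 23 + f.coeff 27 := by
    linarith only [E32, G31, G32]
  have R19 : f.coeff 19 + f.coeff 33 = f.coeff 24 + f.coeff 28 := by
    linarith only [E33, G32, G33]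
  have R20 : f.coeff 20 + f.coeff 34 = f.coeff 25 + f.coeff 29 := by
    linarith only [E34, G33, G34]
  have R21 : f.coeff 21 + f.coeff 35 = f.coeff 26 + f.coeff 30 := by
    linarith only [E35, G34, G35]
  have R22 : f.coeff 22 + f.coeff 36 = f.coeff 27 + f.coeff 31 := by
    linarith only [E36, G35, G36]
  have R23 : f.coeff 23 + f.coeff 37 = f.coeff 28 + f.coeff 32 := by
    linarith only [E37, G36, G37]
  have R24 : f.coeff 24 + f.coeff 38 = f.coeff 29 + f.coeff 33 := by
    linarith only [E38, G37, G38]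
  have R25 : f.coeff 25 + f.coeff 39 = f.coeff 30 + f.coeff 34 := by
    linarith only [E39, G38, G39]
  have R26 : f.coeff 26 + f.coeff 40 = f.coeff 31 + f.coeff 35 := by
    linarith only [E40, G39, G40]
  have R27 : f.coeff 27 + f.coeff 41 = f.coeff 32 + f.coeff 36 := by
    linarith only [E41, G40, G41]
  have R28 : f.coeff 28 + f.coeff 42 = f.coeff 33 + f.coeff 37 := by
    linarith only [E42, G41, G42]
  have R29 : f.coeff 29 + f.coeff 43 = f.coeff 34 + f.coeff 38 := by
    linarith only [E43, G42, G43]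
  have R30 : f.coeff 30 + f.coeff 44 = f.coeff 35 + f.coeff 39 := by
    linarith only [E44, G43, G44]
  have R31 : f.coeff 31 + f.coeff 0 = f.coeff 36 + f.coeff 40 := by
    linarith only [E0, E45, F45, G44, G45]
  have R32 : f.coeff 32 + f.coeff 1 = f.coeff 37 + f.coeff 41 := by
    linarith only [E1, E46, F46, G45, G46]
  have R33 : f.coeff 33 + f.coeff 2 = f.coeff 38 + f.coeff 42 := by
    linarith only [E2, E47, F47, G46, G47]
  have R34 : f.coeff 34 + f.coeff 3 = f.coeff 39 + f.coeff 43 := by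
    linarith only [E3, E48, F48, G47, G48]
  have R35 : f.coeff 35 + f.coeff 4 = f.coeff 40 + f.coeff 44 := by
    linarith only [E4, E49, F49, G48, G49]
  have R36 : f.coeff 36 + f.coeff 5 = f.coeff 41 + f.coeff 0 := by
    linarith only [E5, E50, F50, G49, G50, F45]
  have R37 : f.coeff 37 + f.coeff 6 = f.coeff 42 + f.coeff 1 := by
    linarith only [E6, E51, F51, G50, G51, F46]
  have R38 : f.coeff 38 + f.coeff 7 = f.coeff 43 + f.coeff 2 := by
    linarith only [E7, E52, F52, G51, G52, F47]
  have R39 : f.coeff 39 + f.coeff 8 = f.coeff 44 + f.coeff 3 := by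
    linarith only [E8, E53, F53, G52, G53, F48]
  have R40 : f.coeff 40 + f.coeff 9 = f.coeff 0 + f.coeff 4 := by
    linarith only [E9, E54, F54, G53, G54, F49, F45]
  have R41 : f.coeff 41 + f.coeff 10 = f.coeff 1 + f.coeff 5 := by
    linarith only [E10, E55, F55, G54, G55, F50, F46]
  have R42 : f.coeff 42 + f.coeff 11 = f.coeff 2 + f.coeff 6 := by
    linarith only [E11, E56, F56, G55, G56, F51, F47]
  have R43 : f.coeff 43 + f.coeff 12 = f.coeff 3 + f.coeff 7 := by
    linarith only [E12, E57, F57, G56, G57, F52, F48]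
  have R44 : f.coeff 44 + f.coeff 13 = f.coeff 4 + f.coeff 8 := by
    linarith only [E13, E58, F58, G57, G58, F53, F49]
  have Rall : ∀ s, s < 45 → f.coeff s + f.coeff ((s + 14) % 45)
      = f.coeff ((s + 5) % 45) + f.coeff ((s + 9) % 45) := by
    intro s hs
    interval_cases s <;> norm_num <;> first | exact R0 | exact R1 | exact R2 | exact R3 | exact R4 | exact R5 | exact R6 | exact R7 | exact R8 | exact R9 | exact R10 | exact R11 | exact R12 | exact R13 | exact R14 | exact R15 | exact R16 | exact R17 | exact R18 | exact R19 | exact R20 | exact R21 | exact R22 | exact R23 | exact R24 | exact R25 | exact R26 | exact R27 | exact R28 | exact R29 | exact R30 | exact R31 | exact R32 | exact R33 | exact R34 | exact R35 | exact R36 | exact R37 | exact R38 | exact R39 | exact R40 | exact R41 | exact R42 | exact R43 | exact R44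
  have hsum45 : ∑ i ∈ Finset.range 45, f.coeff (i % 45) = 22 := by
    calc ∑ i ∈ Finset.range 45, f.coeff (i % 45)
        = ∑ i ∈ Finset.range 45, f.coeff i * 1 ^ i := by
          refine Finset.sum_congr rfl fun i hi => ?_
          rw [Nat.mod_eq_of_lt (Finset.mem_range.mp hi)]; ring
      _ = f.eval 1 := (eval_eq_sum_range' hnat 1).symm
      _ = 22 := heval
  refine aux_stmt17 (fun n => f.coeff (n % 45)) (fun n => hB (n % 45))
    (fun n => by simp only [Nat.add_mod_right]) ?_ hsum45
  intro n
  show f.coeff (n % 45) + f.coeff ((n + 14) % 45)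
      = f.coeff ((n + 5) % 45) + f.coeff ((n + 9) % 45)
  have e1 : (n + 14) % 45 = (n % 45 + 14) % 45 := by omega
  have e2 : (n + 5) % 45 = (n % 45 + 5) % 45 := by omega
  have e3 : (n + 9) % 45 = (n % 45 + 9) % 45 := by omega
  rw [e1, e2, e3]
  exact Rall (n % 45) (by omega)
end
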